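/- arXiv:2202.09822 — 11 statements merged into one kernel-verified Lean document; each statement's English description precedes it below -/
import Mathlib

section
/- For every finite simple graph G, twice the minimum cardinality of an odd cover of G is at least the 2-rank of G; that is, 2·b₂(G) ≥ r₂(G). -/
open scoped Classical

/-- A list of bicliques `B 0, …, B (k-1)` (each given by a pair of disjoint
vertex subsets) is an *odd cover* of `G` if two distinct vertices are adjacent
in `G` exactly when they lie in opposite parts of an odd number of the bicliques. -/
def IsOddCover {V : Type*} [Fintype V] (G : SimpleGraph V) {k : ℕ}
    (B : Fin k → Finset V × Finset V) : Prop :=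
  (∀ i, Disjoint (B i).1 (B i).2) ∧
  ∀ u v : V, u ≠ v →
    (G.Adj u v ↔ Odd (Finset.univ.filter (fun i : Fin k =>
      (u ∈ (B i).1 ∧ v ∈ (B i).2) ∨ (u ∈ (B i).2 ∧ v ∈ (B i).1))).card)

/-- `b2 G` is the minimum cardinality of an odd cover of `G`. -/
noncomputable def b2 {V : Type*} [Fintype V] (G : SimpleGraph V) : ℕ :=
  sInf {k : ℕ | ∃ B : Fin k → Finset V × Finset V, IsOddCover G B}

/-- `r2 G` is the rank of the adjacency matrix of `G` over `𝔽₂`. -/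
noncomputable def r2 {V : Type*} [Fintype V] (G : SimpleGraph V) : ℕ :=
  (Matrix.of fun u v : V => if G.Adj u v then (1 : ZMod 2) else 0).rank

/-!
Over `𝔽₂` the parity condition of an odd cover `(Xᵢ, Yᵢ)ᵢ` says exactly that the adjacency
matrix is `∑ᵢ (1_{Xᵢ} 1_{Yᵢ}ᵀ + 1_{Yᵢ} 1_{Xᵢ}ᵀ)`, a sum of `b₂(G)` matrices of rank at most `2`;
subadditivity of rank gives `r₂(G) ≤ 2 b₂(G)`. The minimum `b₂(G)` is attained because odd covers
exist: take one single-edge biclique per edge.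
-/

open Finset Matrix

namespace Matrix

variable {K m n : Type*} [Field K] [Fintype n]

theorem rank_add_le (A B : Matrix m n K) : (A + B).rank ≤ A.rank + B.rank := by
  rw [rank, rank, rank, mulVecLin_add]
  exact (Submodule.finrank_mono (LinearMap.range_add_le _ _)).trans
    (Submodule.finrank_add_le_finrank_add_finrank _ _)

theorem rank_sum_le {ι : Type*} (s : Finset ι) (A : ι → Matrix m n K) :
    (∑ i ∈ s, A i).rank ≤ ∑ i ∈ s, (A i).rank :=
  Finset.sum_hom_rel (r := fun A r => rank A ≤ r) rank_zero.le
    fun _ _ _ h => (rank_add_le _ _).trans (by gcongr)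

end Matrix

section Biclique

variable {V R : Type*} [NonAssocSemiring R]

noncomputable def bicliqueMatrix (X Y : Finset V) : Matrix V V R :=
  vecMulVec ((X : Set V).indicator 1) ((Y : Set V).indicator 1) +
    vecMulVec ((Y : Set V).indicator 1) ((X : Set V).indicator 1)

theorem bicliqueMatrix_apply {X Y : Finset V} (h : Disjoint X Y) (u v : V) :
    bicliqueMatrix (R := R) X Y u v =
      if (u ∈ X ∧ v ∈ Y) ∨ (u ∈ Y ∧ v ∈ X) then 1 else 0 := by
  have := Finset.disjoint_left.mp h
  by_cases hu : u ∈ X <;> by_cases hv : v ∈ X <;>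
    simp [bicliqueMatrix, vecMulVec_apply, Set.indicator_apply, hu, hv, this]

theorem rank_bicliqueMatrix_le {K : Type*} [Field K] [Fintype V] (X Y : Finset V) :
    (bicliqueMatrix (R := K) X Y).rank ≤ 2 :=
  (rank_add_le _ _).trans (add_le_add (rank_vecMulVec_le _ _) (rank_vecMulVec_le _ _))

end Biclique

theorem ZMod.ite_eq_natCast_iff_odd (p : Prop) [Decidable p] (n : ℕ) :
    ((if p then 1 else 0 : ZMod 2) = n) ↔ (p ↔ Odd n) := by
  by_cases hp : p <;>
    simp [hp, eq_comm, ZMod.natCast_eq_one_iff_odd, ZMod.natCast_eq_zero_iff_even]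

theorem isOddCover_iff_adjMatrix_eq_sum {V : Type*} [Fintype V] (G : SimpleGraph V) {k : ℕ}
    (B : Fin k → Finset V × Finset V) :
    IsOddCover G B ↔ (∀ i, Disjoint (B i).1 (B i).2) ∧
      G.adjMatrix (ZMod 2) = ∑ i, bicliqueMatrix (B i).1 (B i).2 := by
  refine and_congr_right fun hB => ?_
  rw [← Matrix.ext_iff]
  refine forall_congr' fun u => forall_congr' fun v => ?_
  simp only [Matrix.sum_apply, bicliqueMatrix_apply (hB _), sum_boole,
    SimpleGraph.adjMatrix_apply, ZMod.ite_eq_natCast_iff_odd]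
  by_cases huv : u = v
  · subst huv
    have hempty : ∀ i, ¬((u ∈ (B i).1 ∧ u ∈ (B i).2) ∨ (u ∈ (B i).2 ∧ u ∈ (B i).1)) :=
      fun i => by have := @Finset.disjoint_left.mp (hB i) u; tauto
    simp [hempty]
  · simp [huv]

theorem Finset.card_filter_coe_equiv_eq {α ι : Type*} [Fintype ι] [DecidableEq α] {s : Finset α}
    (e : ι ≃ s) (a : α) : #{i | (e i : α) = a} = if a ∈ s then 1 else 0 := by
  split_ifs with ha
  · rw [card_eq_one]
    exact ⟨e.symm ⟨a, ha⟩, by ext i; simp [Equiv.eq_symm_apply, Subtype.ext_iff]⟩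
  · rw [card_eq_zero, filter_eq_empty_iff]
    rintro i - rfl
    exact ha (e i).2

theorem Sym2.mk_out {α : Type*} (z : Sym2 α) : s(z.out.1, z.out.2) = z :=
  Quot.out_eq z

theorem Sym2.eq_mk_iff_out {α : Type*} (z : Sym2 α) (u v : α) :
    z = s(u, v) ↔ (u = z.out.1 ∧ v = z.out.2) ∨ (u = z.out.2 ∧ v = z.out.1) := by
  conv_lhs => rw [← z.mk_out]
  rw [Sym2.eq_iff]
  tauto

theorem exists_isOddCover {V : Type*} [Fintype V] (G : SimpleGraph V) :
    ∃ k, ∃ B : Fin k → Finset V × Finset V, IsOddCover G B := by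
  let e := G.edgeFinset.equivFin.symm
  refine ⟨_, fun i => ({(e i : Sym2 V).out.1}, {(e i : Sym2 V).out.2}), fun i => ?_,
    fun u v huv => ?_⟩
  · have hadj : G.Adj (e i : Sym2 V).out.1 (e i : Sym2 V).out.2 := by
      rw [← SimpleGraph.mem_edgeSet, Sym2.mk_out, ← SimpleGraph.mem_edgeFinset]
      exact (e i).2
    exact disjoint_singleton.mpr hadj.ne
  · simp only [mem_singleton, ← Sym2.eq_mk_iff_out]
    rw [Finset.card_filter_coe_equiv_eq]
    split_ifs with h <;> simpa using h

theorem IsOddCover.rank_adjMatrix_le {V : Type*} [Fintype V] {G : SimpleGraph V} {k : ℕ}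
    {B : Fin k → Finset V × Finset V} (hB : IsOddCover G B) :
    (G.adjMatrix (ZMod 2)).rank ≤ 2 * k :=
  calc (G.adjMatrix (ZMod 2)).rank
      = (∑ i, bicliqueMatrix (R := ZMod 2) (B i).1 (B i).2).rank := by
        rw [((isOddCover_iff_adjMatrix_eq_sum G B).mp hB).2]
    _ ≤ ∑ i, (bicliqueMatrix (R := ZMod 2) (B i).1 (B i).2).rank := rank_sum_le _ _
    _ ≤ ∑ _i : Fin k, 2 := sum_le_sum fun i _ => rank_bicliqueMatrix_le _ _
    _ = 2 * k := by simp [mul_comm]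

theorem stmt0 {V : Type*} [Fintype V] (G : SimpleGraph V) :
    r2 G ≤ 2 * b2 G := by
  obtain ⟨B, hB⟩ : ∃ B : Fin (b2 G) → Finset V × Finset V, IsOddCover G B :=
    Nat.sInf_mem (exists_isOddCover G)
  exact hB.rank_adjMatrix_le
end

section
/- For every finite simple graph G, the minimum cardinality of an odd cover of G is at most the 2-rank of G; that is, b₂(G) ≤ r₂(G). -/
open scoped Classical


section Aux

open Matrix Module

/-- Indicator (in `ZMod 2`) that `u` and `v` are on opposite sides of the biclique `P`. -/
noncomputable def crossInd {V : Type*} (P : Finset V × Finset V) (u v : V) : ZMod 2 :=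
  if (u ∈ P.1 ∧ v ∈ P.2) ∨ (u ∈ P.2 ∧ v ∈ P.1) then 1 else 0

lemma zmod2_add_self : ∀ a : ZMod 2, a + a = 0 := by decide

lemma zmod2_cases : ∀ a : ZMod 2, a = 0 ∨ a = 1 := by decide

lemma cast_eq_one_iff_odd (n : ℕ) : ((n : ZMod 2) = 1) ↔ Odd n := by
  rw [Nat.odd_iff, ← ZMod.natCast_mod n 2]
  rcases Nat.mod_two_eq_zero_or_one n with h | h <;> rw [h] <;> simp

/-- Key decomposition lemma. -/
lemma exists_biclique_decomp {V : Type*} [Fintype V] :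
    ∀ n (A : Matrix V V (ZMod 2)), (∀ u v, A u v = A v u) → (∀ u, A u u = 0) →
      A.rank ≤ n →
      ∃ (k : ℕ) (B : Fin k → Finset V × Finset V), k ≤ n ∧
        (∀ i, Disjoint (B i).1 (B i).2) ∧
        ∀ u v, A u v = ∑ i, crossInd (B i) u v := by
  intro n
  induction n using Nat.strong_induction_on with
  | _ n ih =>
  intro A hsymm hdiag hrank
  by_cases hA : A = 0
  · refine ⟨0, Fin.elim0, Nat.zero_le _, fun i => i.elim0, fun u v => ?_⟩
    simp [hA]
  · have hex : ∃ u v, A u v ≠ 0 := by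
      by_contra h
      push_neg at h
      exact hA (by ext u v; simp [h])
    obtain ⟨u, v, huv0⟩ := hex
    have huv : A u v = 1 := (zmod2_cases (A u v)).resolve_left huv0
    set x : V → ZMod 2 := fun w => A w v with hxdef
    set y : V → ZMod 2 := fun w => A w u with hydef
    have hxu : x u = 1 := huv
    have hyu : y u = 0 := hdiag u
    have hxv : x v = 0 := hdiag v
    have hyv : y v = 1 := (hsymm v u).trans huv
    set A' : Matrix V V (ZMod 2) :=
      Matrix.of (fun w z => A w z + x w * y z + y w * x z) with hA'def
    have hA'app : ∀ w z, A' w z = A w z + x w * y z + y w * x z := fun w z => rfl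
    have hA'symm : ∀ w z, A' w z = A' z w := by
      intro w z
      rw [hA'app, hA'app, hsymm w z]
      ring
    have hA'diag : ∀ w, A' w w = 0 := by
      intro w
      rw [hA'app, hdiag w, zero_add, mul_comm (y w) (x w), zmod2_add_self]
    -- mulVec formula
    have hmv : ∀ c, A'.mulVec c = A.mulVec c + (y ⬝ᵥ c) • x + (x ⬝ᵥ c) • y := by
      intro c
      funext w
      simp only [hA'def, Matrix.mulVec, dotProduct, Matrix.of_apply, Pi.add_apply,
        Pi.smul_apply, smul_eq_mul, add_mul, Finset.sum_add_distrib]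
      rw [Finset.sum_mul, Finset.sum_mul]
      congr 1
      · congr 1
        exact Finset.sum_congr rfl fun z _ => by ring
      · exact Finset.sum_congr rfl fun z _ => by ring
    have hxmem : x ∈ LinearMap.range A.mulVecLin := by
      refine ⟨Pi.single v 1, ?_⟩
      funext w
      simp [Matrix.mulVecLin_apply, Matrix.mulVec_single, hxdef]
    have hymem : y ∈ LinearMap.range A.mulVecLin := by
      refine ⟨Pi.single u 1, ?_⟩
      funext w
      simp [Matrix.mulVecLin_apply, Matrix.mulVec_single, hydef]
    set S : Submodule (ZMod 2) (V → ZMod 2) := LinearMap.range A'.mulVecLin with hS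
    set T : Submodule (ZMod 2) (V → ZMod 2) :=
      Submodule.span (ZMod 2) ({x, y} : Set (V → ZMod 2)) with hT
    have hxT : x ∈ T := Submodule.subset_span (Set.mem_insert _ _)
    have hyT : y ∈ T := Submodule.subset_span (Set.mem_insert_of_mem _ rfl)
    have hsup : S ⊔ T = LinearMap.range A.mulVecLin := by
      apply le_antisymm
      · apply sup_le
        · rintro z ⟨c, rfl⟩
          rw [Matrix.mulVecLin_apply, hmv c]
          exact add_mem (add_mem ⟨c, rfl⟩ (Submodule.smul_mem _ _ hxmem))
            (Submodule.smul_mem _ _ hymem)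
        · rw [hT, Submodule.span_le]
          rintro z hz
          rcases hz with rfl | hz
          · exact hxmem
          · rw [Set.mem_singleton_iff] at hz
            subst hz
            exact hymem
      · rintro z ⟨c, rfl⟩
        have hz : A.mulVecLin c = A'.mulVec c + ((y ⬝ᵥ c) • x + (x ⬝ᵥ c) • y) := by
          rw [Matrix.mulVecLin_apply, hmv c]
          funext w
          simp only [Pi.add_apply, Pi.smul_apply, smul_eq_mul]
          linear_combination - zmod2_add_self (y ⬝ᵥ c * x w) - zmod2_add_self (x ⬝ᵥ c * y w)
        rw [hz]
        refine add_mem (Submodule.mem_sup_left ⟨c, rfl⟩)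
          (Submodule.mem_sup_right
            (add_mem (Submodule.smul_mem _ _ hxT) (Submodule.smul_mem _ _ hyT)))
    have hrowu : ∀ z, A' u z = 0 := by
      intro z
      rw [hA'app, hxu, hyu, one_mul, zero_mul, add_zero,
        show y z = A u z from hsymm z u, zmod2_add_self]
    have hrowv : ∀ z, A' v z = 0 := by
      intro z
      rw [hA'app, hxv, hyv, zero_mul, add_zero, one_mul,
        show x z = A v z from hsymm z v, zmod2_add_self]
    have hmvu : ∀ c, A'.mulVec c u = 0 := by
      intro c
      simp only [Matrix.mulVec, dotProduct]
      apply Finset.sum_eq_zero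
      intro z _
      rw [show A' u z = 0 from hrowu z, zero_mul]
    have hmvv : ∀ c, A'.mulVec c v = 0 := by
      intro c
      simp only [Matrix.mulVec, dotProduct]
      apply Finset.sum_eq_zero
      intro z _
      rw [show A' v z = 0 from hrowv z, zero_mul]
    have hinf : S ⊓ T = ⊥ := by
      rw [eq_bot_iff]
      rintro z ⟨hzS, hzT⟩
      rw [hT] at hzT
      obtain ⟨a, b, hab⟩ := Submodule.mem_span_pair.1 hzT
      obtain ⟨c, hc⟩ := hzS
      have hcz : A'.mulVec c = z := by rw [← hc, Matrix.mulVecLin_apply]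
      have hzu : z u = 0 := by rw [← hcz]; exact hmvu c
      have hzv : z v = 0 := by rw [← hcz]; exact hmvv c
      have ha : a = 0 := by
        have h := congrFun hab u
        simp only [Pi.add_apply, Pi.smul_apply, smul_eq_mul, hxu, hyu, mul_one, mul_zero,
          add_zero, hzu] at h
        exact h
      have hb : b = 0 := by
        have h := congrFun hab v
        simp only [Pi.add_apply, Pi.smul_apply, smul_eq_mul, hxv, hyv, mul_one, mul_zero,
          zero_add, hzv] at h
        exact h
      simp only [Submodule.mem_bot]
      rw [← hab, ha, hb]
      simp
    have hxyind : LinearIndependent (ZMod 2) ![x, y] := by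
      rw [LinearIndependent.pair_iff]
      intro s t hst
      constructor
      · have h := congrFun hst u
        simpa [hxu, hyu] using h
      · have h := congrFun hst v
        simpa [hxv, hyv] using h
    have hrangexy : Set.range ![x, y] = ({x, y} : Set (V → ZMod 2)) := by
      ext z; simp [Fin.exists_fin_two, or_comm]
    have hTrank : Module.finrank (ZMod 2) T = 2 := by
      rw [hT, ← hrangexy, finrank_span_eq_card hxyind]
      simp
    have hrankA : A.rank = A'.rank + 2 := by
      have h := Submodule.finrank_sup_add_finrank_inf_eq S T
      rw [hsup, hinf, hTrank, finrank_bot, add_zero] at h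
      exact h
    have hrank' : A'.rank + 2 ≤ n := hrankA ▸ hrank
    obtain ⟨k', B', hk', hdisj', hsum'⟩ := ih A'.rank (by omega) A' hA'symm hA'diag le_rfl
    set Xf : Finset V := Finset.univ.filter (fun w => x w = 1) with hXf
    set Yf : Finset V := Finset.univ.filter (fun w => y w = 1) with hYf
    set p1 : Finset V × Finset V := (Xf \ Yf, Yf \ Xf) with hp1
    set p2 : Finset V × Finset V := ((Xf \ Yf) ∪ (Yf \ Xf), Xf ∩ Yf) with hp2
    refine ⟨k' + 2, (Fin.cons p1 (Fin.cons p2 B') : Fin (k' + 2) → Finset V × Finset V), by omega, ?_, ?_⟩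
    · intro i
      refine Fin.cases ?_ (fun j => ?_) i
      · simp only [Fin.cons_zero, hp1]
        exact disjoint_sdiff_sdiff
      · refine Fin.cases ?_ (fun j' => ?_) j
        · simp only [Fin.cons_succ, Fin.cons_zero, hp2]
          refine Finset.disjoint_union_left.2 ⟨?_, ?_⟩
          · exact Finset.sdiff_disjoint.mono_right Finset.inter_subset_right
          · exact Finset.sdiff_disjoint.mono_right Finset.inter_subset_left
        · simp only [Fin.cons_succ]
          exact hdisj' j'
    · intro u0 v0
      have hsplit : ∑ i : Fin (k' + 2), crossInd ((Fin.cons p1 (Fin.cons p2 B') : Fin (k' + 2) → Finset V × Finset V) i) u0 v0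
          = crossInd p1 u0 v0 + (crossInd p2 u0 v0 + ∑ i : Fin k', crossInd (B' i) u0 v0) := by
        rw [Fin.sum_univ_succ]
        simp only [Fin.cons_zero, Fin.cons_succ]
        rw [Fin.sum_univ_succ]
        simp only [Fin.cons_zero, Fin.cons_succ]
      have key : crossInd p1 u0 v0 + crossInd p2 u0 v0 = x u0 * y v0 + y u0 * x v0 := by
        simp only [crossInd, hp1, hp2, Finset.mem_sdiff, Finset.mem_union, Finset.mem_inter,
          hXf, hYf, Finset.mem_filter, Finset.mem_univ, true_and]
        rcases zmod2_cases (x u0) with ha | ha <;> rcases zmod2_cases (y u0) with hb | hb <;>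
          rcases zmod2_cases (x v0) with hc | hc <;> rcases zmod2_cases (y v0) with hd | hd <;>
          rw [ha, hb, hc, hd] <;> norm_num <;> try decide
      rw [hsplit, ← hsum' u0 v0, hA'app u0 v0]
      linear_combination - key - zmod2_add_self (x u0 * y v0) - zmod2_add_self (y u0 * x v0)

end Aux

theorem stmt1 {V : Type*} [Fintype V] (G : SimpleGraph V) :
    b2 G ≤ r2 G := by
  set M : Matrix V V (ZMod 2) :=
    Matrix.of (fun u v : V => if G.Adj u v then (1 : ZMod 2) else 0) with hM
  have hsymm : ∀ u v, M u v = M v u := by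
    intro u v
    simp [hM, G.adj_comm]
  have hdiag : ∀ u, M u u = 0 := by
    intro u
    simp [hM]
  obtain ⟨k, B, hk, hdisj, hsum⟩ := exists_biclique_decomp M.rank M hsymm hdiag le_rfl
  have hcover : IsOddCover G B := by
    refine ⟨hdisj, fun u v huv => ?_⟩
    have h1 : M u v = ((Finset.univ.filter (fun i : Fin k =>
        (u ∈ (B i).1 ∧ v ∈ (B i).2) ∨ (u ∈ (B i).2 ∧ v ∈ (B i).1))).card : ZMod 2) := by
      rw [hsum u v]
      simp only [crossInd]
      rw [Finset.sum_boole]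
    rw [← cast_eq_one_iff_odd, ← h1]
    constructor
    · intro hadj
      simp [hM, hadj]
    · intro h
      by_contra hadj
      have h0 : M u v = 0 := by simp [hM, hadj]
      rw [h0] at h
      exact zero_ne_one h
  have hb2 : b2 G ≤ k := Nat.sInf_le ⟨B, hcover⟩
  exact le_trans hb2 hk
end

section
/- For every positive integer k, any twin-free finite simple graph G with b₂(G) ≤ k is isomorphic to an induced subgraph of B_k; that is, there exists a graph embedding (an injective map preserving both adjacency and non-adjacency) from G into B_k. -/
open scoped Classical

/-- The graph `B_k`: vertices are strings of length `k` over `{0,1,ε}`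
(encoded as `Fin k → Option Bool`), with two strings adjacent iff the number of
positions where one contains `0` and the other contains `1` is odd. -/
def Bgraph (k : ℕ) : SimpleGraph (Fin k → Option Bool) :=
  SimpleGraph.fromRel (fun u v => Odd (Finset.univ.filter (fun i : Fin k =>
    (u i = some false ∧ v i = some true) ∨ (u i = some true ∧ v i = some false))).card)

lemma filter_card_equiv {α β : Type*} [Fintype α] [Fintype β] (e : α ≃ β) (p : β → Prop)
    [DecidablePred p] [DecidablePred fun a => p (e a)] :
    (Finset.univ.filter fun a => p (e a)).card = (Finset.univ.filter p).card := by
  classical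
  apply Finset.card_bij (fun a _ => e a)
  · intro a ha; simp only [Finset.mem_filter, Finset.mem_univ, true_and] at ha ⊢; exact ha
  · intro a _ b _ h; exact e.injective h
  · intro b hb
    refine ⟨e.symm b, ?_, by simp⟩
    simp only [Finset.mem_filter, Finset.mem_univ, true_and, Equiv.apply_symm_apply] at hb ⊢
    exact hb

lemma exists_oddCover {V : Type*} [Fintype V] (G : SimpleGraph V) :
    ∃ (n : ℕ) (B : Fin n → Finset V × Finset V), IsOddCover G B := by
  classical
  let e := Fintype.equivFin V
  let ee := (Fintype.equivFin (V × V)).symm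
  let C : V × V → Finset V × Finset V := fun q =>
    if G.Adj q.1 q.2 ∧ e q.1 < e q.2 then ({q.1}, {q.2}) else (∅, ∅)
  refine ⟨Fintype.card (V × V), fun i => C (ee i), ?_, ?_⟩
  · intro i
    by_cases h : G.Adj (ee i).1 (ee i).2 ∧ e (ee i).1 < e (ee i).2
    · simp only [C, if_pos h, Finset.disjoint_singleton]
      exact h.1.ne
    · simp [C, if_neg h]
  · intro u v huv
    have hcard : (Finset.univ.filter (fun i : Fin (Fintype.card (V × V)) =>
        (u ∈ (C (ee i)).1 ∧ v ∈ (C (ee i)).2) ∨ (u ∈ (C (ee i)).2 ∧ v ∈ (C (ee i)).1))).card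
        = (Finset.univ.filter (fun q : V × V =>
        (u ∈ (C q).1 ∧ v ∈ (C q).2) ∨ (u ∈ (C q).2 ∧ v ∈ (C q).1))).card :=
      filter_card_equiv ee (fun q : V × V =>
        (u ∈ (C q).1 ∧ v ∈ (C q).2) ∨ (u ∈ (C q).2 ∧ v ∈ (C q).1))
    simp only [Finset.filter_congr_decidable] at hcard ⊢
    rw [hcard]
    by_cases hA : G.Adj u v
    · simp only [hA, true_iff]
      rcases lt_trichotomy (e u) (e v) with hlt | heq | hgt
      · have : (Finset.univ.filter (fun q : V × V =>
            (u ∈ (C q).1 ∧ v ∈ (C q).2) ∨ (u ∈ (C q).2 ∧ v ∈ (C q).1))) = {(u, v)} := by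
          ext q
          simp only [Finset.mem_filter, Finset.mem_univ, true_and, Finset.mem_singleton]
          constructor
          · rintro (⟨h1, h2⟩ | ⟨h1, h2⟩)
            · by_cases hq : G.Adj q.1 q.2 ∧ e q.1 < e q.2
              · simp only [C, if_pos hq, Finset.mem_singleton] at h1 h2
                exact Prod.ext h1.symm h2.symm
              · simp [C, if_neg hq] at h1
            · by_cases hq : G.Adj q.1 q.2 ∧ e q.1 < e q.2
              · simp only [C, if_pos hq, Finset.mem_singleton] at h1 h2
                exact absurd hq.2 (by rw [← h2, ← h1]; exact hlt.asymm)
              · simp [C, if_neg hq] at h1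
          · rintro rfl
            have hq : G.Adj u v ∧ e u < e v := ⟨hA, hlt⟩
            left
            simp [C, if_pos hq]
        rw [this]; simp
      · exact absurd (e.injective heq) huv
      · have : (Finset.univ.filter (fun q : V × V =>
            (u ∈ (C q).1 ∧ v ∈ (C q).2) ∨ (u ∈ (C q).2 ∧ v ∈ (C q).1))) = {(v, u)} := by
          ext q
          simp only [Finset.mem_filter, Finset.mem_univ, true_and, Finset.mem_singleton]
          constructor
          · rintro (⟨h1, h2⟩ | ⟨h1, h2⟩)
            · by_cases hq : G.Adj q.1 q.2 ∧ e q.1 < e q.2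
              · simp only [C, if_pos hq, Finset.mem_singleton] at h1 h2
                exact absurd hq.2 (by rw [← h1, ← h2]; exact hgt.asymm)
              · simp [C, if_neg hq] at h1
            · by_cases hq : G.Adj q.1 q.2 ∧ e q.1 < e q.2
              · simp only [C, if_pos hq, Finset.mem_singleton] at h1 h2
                exact Prod.ext h2.symm h1.symm
              · simp [C, if_neg hq] at h1
          · rintro rfl
            have hq : G.Adj v u ∧ e v < e u := ⟨hA.symm, hgt⟩
            right
            simp [C, if_pos hq]
        rw [this]; simp
    · simp only [hA, false_iff]
      have : (Finset.univ.filter (fun q : V × V =>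
          (u ∈ (C q).1 ∧ v ∈ (C q).2) ∨ (u ∈ (C q).2 ∧ v ∈ (C q).1))) = ∅ := by
        ext q
        simp only [Finset.mem_filter, Finset.mem_univ, true_and, Finset.notMem_empty, iff_false]
        rintro (⟨h1, h2⟩ | ⟨h1, h2⟩) <;>
        · by_cases hq : G.Adj q.1 q.2 ∧ e q.1 < e q.2
          · simp only [C, if_pos hq, Finset.mem_singleton] at h1 h2
            subst h1; subst h2
            exact hA (by first | exact hq.1 | exact hq.1.symm)
          · simp [C, if_neg hq] at h1
      rw [this]; simp

theorem stmt2 {V : Type*} [Fintype V] (G : SimpleGraph V) (k : ℕ) (hk : 0 < k)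
    (htwinfree : ∀ u v : V, G.neighborSet u = G.neighborSet v → u = v)
    (hb2 : b2 G ≤ k) :
    Nonempty (G ↪g Bgraph k) := by
  classical
  have hne : {n : ℕ | ∃ B : Fin n → Finset V × Finset V, IsOddCover G B}.Nonempty := by
    obtain ⟨n, B, hB⟩ := exists_oddCover G
    exact ⟨n, B, hB⟩
  obtain ⟨B, hB⟩ := Nat.sInf_mem hne
  set m := b2 G with hm
  have hmk : m ≤ k := hb2
  -- the embedding map
  let f : V → Fin k → Option Bool := fun v i =>
    if h : (i : ℕ) < m then
      (if v ∈ (B ⟨i, h⟩).1 then some false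
       else if v ∈ (B ⟨i, h⟩).2 then some true else none)
    else none
  have hf : ∀ (w : V) (j : Fin m), f w (Fin.castLE hmk j) =
      (if w ∈ (B j).1 then some false
       else if w ∈ (B j).2 then some true else none) := by
    intro w j
    have hj : ((Fin.castLE hmk j : Fin k) : ℕ) < m := j.2
    simp only [f, dif_pos hj]
    rfl
  have hfalse : ∀ (w : V) (j : Fin m),
      f w (Fin.castLE hmk j) = some false ↔ w ∈ (B j).1 := by
    intro w j
    rw [hf]
    split_ifs with h1 h2 <;> simp_all
  have htrue : ∀ (w : V) (j : Fin m),
      f w (Fin.castLE hmk j) = some true ↔ w ∈ (B j).2 := by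
    intro w j
    rw [hf]
    split_ifs with h1 h2
    · simp only [Option.some.injEq]
      constructor
      · intro h; cases h
      · intro h; exact absurd (Finset.disjoint_left.mp (hB.1 j) h1 h) id
    · simp [h2]
    · simp [h2]
  have hnone : ∀ (w : V) (i : Fin k), ¬ ((i : ℕ) < m) → f w i = none := by
    intro w i h
    simp only [f, dif_neg h]
  -- count equality
  have hcount : ∀ u v : V,
      (Finset.univ.filter (fun i : Fin k =>
        (f u i = some false ∧ f v i = some true) ∨
        (f u i = some true ∧ f v i = some false))).card =
      (Finset.univ.filter (fun j : Fin m =>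
        (u ∈ (B j).1 ∧ v ∈ (B j).2) ∨ (u ∈ (B j).2 ∧ v ∈ (B j).1))).card := by
    intro u v
    symm
    apply Finset.card_bij (fun j _ => Fin.castLE hmk j)
    · intro j hj
      simp only [Finset.mem_filter, Finset.mem_univ, true_and] at hj ⊢
      rcases hj with ⟨h1, h2⟩ | ⟨h1, h2⟩
      · exact Or.inl ⟨(hfalse u j).mpr h1, (htrue v j).mpr h2⟩
      · exact Or.inr ⟨(htrue u j).mpr h1, (hfalse v j).mpr h2⟩
    · intro a _ b _ h
      exact Fin.castLE_injective hmk h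
    · intro i hi
      simp only [Finset.mem_filter, Finset.mem_univ, true_and] at hi
      have him : (i : ℕ) < m := by
        by_contra h
        rcases hi with ⟨h1, _⟩ | ⟨h1, _⟩ <;> rw [hnone u i h] at h1 <;> cases h1
      refine ⟨⟨(i : ℕ), him⟩, ?_, rfl⟩
      simp only [Finset.mem_filter, Finset.mem_univ, true_and]
      rcases hi with ⟨h1, h2⟩ | ⟨h1, h2⟩
      · exact Or.inl ⟨(hfalse u ⟨(i : ℕ), him⟩).mp h1, (htrue v ⟨(i : ℕ), him⟩).mp h2⟩
      · exact Or.inr ⟨(htrue u ⟨(i : ℕ), him⟩).mp h1, (hfalse v ⟨(i : ℕ), him⟩).mp h2⟩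
  -- adjacency correspondence
  have hadj : ∀ u v : V, (Bgraph k).Adj (f u) (f v) ↔ G.Adj u v := by
    intro u v
    rw [Bgraph, SimpleGraph.fromRel_adj]
    by_cases huv : u = v
    · subst huv
      simp [SimpleGraph.irrefl]
    · have hsym : (Finset.univ.filter (fun i : Fin k =>
          (f v i = some false ∧ f u i = some true) ∨
          (f v i = some true ∧ f u i = some false))) =
          (Finset.univ.filter (fun i : Fin k =>
          (f u i = some false ∧ f v i = some true) ∨
          (f u i = some true ∧ f v i = some false))) := by
        apply Finset.filter_congr
        intro i _
        tauto
      rw [hsym, or_self]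
      have hOdd : Odd (Finset.univ.filter (fun i : Fin k =>
          (f u i = some false ∧ f v i = some true) ∨
          (f u i = some true ∧ f v i = some false))).card ↔ G.Adj u v := by
        rw [hcount u v]
        have hBuv := hB.2 u v huv
        exact hBuv.symm
      rw [hOdd]
      constructor
      · rintro ⟨_, h⟩; exact h
      · intro h
        refine ⟨?_, h⟩
        intro hfeq
        rw [← hOdd] at h
        obtain ⟨i, hi⟩ := Finset.card_pos.mp h.pos
        simp only [Finset.mem_filter, Finset.mem_univ, true_and, hfeq] at hi
        rcases hi with ⟨h1, h2⟩ | ⟨h1, h2⟩ <;> rw [h1] at h2 <;> cases h2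
  -- injectivity
  have hinj : Function.Injective f := by
    intro u v hfeq
    apply htwinfree
    ext w
    simp only [SimpleGraph.mem_neighborSet]
    rw [← hadj u w, ← hadj v w, hfeq]
  exact ⟨⟨⟨f, hinj⟩, fun {u v} => hadj u v⟩⟩
end

section
/- For every positive integer k, b₂(T_k) ≥ log₃(4)·k; equivalently, 3^{b₂(T_k)} ≥ 4^k. -/
open scoped Classical

/-- The graph `T_k`: vertices are strings of length `k` over `{0,1,2,ε}`
(encoded as `Fin k → Option (Fin 3)`), with two strings adjacent iff the number
of positions where the entries differ and neither is `ε` is odd. -/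
def Tgraph (k : ℕ) : SimpleGraph (Fin k → Option (Fin 3)) :=
  SimpleGraph.fromRel (fun u v => Odd (Finset.univ.filter (fun i : Fin k =>
    u i ≠ v i ∧ u i ≠ none ∧ v i ≠ none)).card)

/-! ### Auxiliary material -/

section AuxOdd

private lemma odd_cast (n : ℕ) : (n : ZMod 2) = if n % 2 = 1 then 1 else 0 := by
  rw [← ZMod.natCast_mod n 2]
  rcases Nat.mod_two_eq_zero_or_one n with h | h <;> simp [h]

private lemma odd_iff_cast (n : ℕ) : Odd n ↔ (n : ZMod 2) = 1 := by
  rw [odd_cast, Nat.odd_iff]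
  rcases Nat.mod_two_eq_zero_or_one n with h | h <;> simp [h]

private lemma not_odd_cast {n : ℕ} (h : ¬ Odd n) : (n : ZMod 2) = 0 := by
  rw [Nat.odd_iff] at h
  rw [odd_cast, if_neg h]

private lemma cast_zero_or_one (n : ℕ) : (n : ZMod 2) = 0 ∨ (n : ZMod 2) = 1 := by
  rw [odd_cast]; split <;> simp

end AuxOdd

section AuxT

variable {k : ℕ}

private def dS (u v : Fin k → Option (Fin 3)) : Finset (Fin k) :=
  Finset.univ.filter (fun i => u i ≠ v i ∧ u i ≠ none ∧ v i ≠ none)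

private lemma dS_symm (u v : Fin k → Option (Fin 3)) : dS u v = dS v u := by
  unfold dS
  ext i
  simp only [Finset.mem_filter]
  tauto

private lemma tadj (u v : Fin k → Option (Fin 3)) :
    (Tgraph k).Adj u v ↔ u ≠ v ∧ Odd (dS u v).card := by
  show (u ≠ v ∧ (Odd (dS u v).card ∨ Odd (dS v u).card)) ↔ _
  rw [dS_symm v u, or_self]

private lemma dS_card_cast (u v : Fin k → Option (Fin 3)) :
    ((dS u v).card : ZMod 2)
      = ∑ i : Fin k, if u i ≠ v i ∧ u i ≠ none ∧ v i ≠ none then (1 : ZMod 2) else 0 :=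
  Finset.natCast_card_filter _ _

private lemma step (u v : Fin k → Option (Fin 3)) (j : Fin k)
    (wj : Option (Fin 3)) (hwu : wj ≠ u j) (hwv : wj ≠ v j)
    (hodd : (if u j ≠ wj ∧ u j ≠ none ∧ wj ≠ none then (1 : ZMod 2) else 0)
          + (if v j ≠ wj ∧ v j ≠ none ∧ wj ≠ none then (1 : ZMod 2) else 0)
          + (if v j ≠ u j ∧ v j ≠ none ∧ u j ≠ none then (1 : ZMod 2) else 0) = 1)
    (hev : ¬ Odd (dS u v).card) :
    ∃ w, w ≠ u ∧ w ≠ v ∧ ¬((Tgraph k).Adj u w ↔ (Tgraph k).Adj v w) := by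
  classical
  set w : Fin k → Option (Fin 3) := Function.update u j wj with hwdef
  have hwj : w j = wj := Function.update_self _ _ _
  have hwi : ∀ i : Fin k, i ≠ j → w i = u i := fun i hi => Function.update_of_ne hi _ _
  have hwu' : w ≠ u := Function.ne_iff.mpr ⟨j, by rw [hwj]; exact hwu⟩
  have hwv' : w ≠ v := Function.ne_iff.mpr ⟨j, by rw [hwj]; exact hwv⟩
  have e1 : ((dS u w).card : ZMod 2)
      = (if u j ≠ wj ∧ u j ≠ none ∧ wj ≠ none then (1 : ZMod 2) else 0) := by
    rw [dS_card_cast, Fintype.sum_eq_single j (fun i hi => by simp [hwi i hi]), hwj]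
  have e2 : ((dS v w).card : ZMod 2) + ((dS v u).card : ZMod 2)
      = (if v j ≠ wj ∧ v j ≠ none ∧ wj ≠ none then (1 : ZMod 2) else 0)
      + (if v j ≠ u j ∧ v j ≠ none ∧ u j ≠ none then (1 : ZMod 2) else 0) := by
    rw [dS_card_cast, dS_card_cast, ← Finset.sum_add_distrib,
      Fintype.sum_eq_single j (fun i hi => by rw [hwi i hi]; exact CharTwo.add_self_eq_zero _),
      hwj]
  have e0 : ((dS v u).card : ZMod 2) = 0 := by
    rw [dS_symm v u]; exact not_odd_cast hev
  have key : ((dS u w).card : ZMod 2) + ((dS v w).card : ZMod 2) = 1 := by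
    linear_combination e1 + e2 - e0 + hodd
  have oddxor : Odd (dS u w).card ↔ ¬ Odd (dS v w).card := by
    rw [odd_iff_cast, odd_iff_cast]
    rcases cast_zero_or_one (dS u w).card with h1 | h1 <;>
      rcases cast_zero_or_one (dS v w).card with h2 | h2 <;>
      rw [h1, h2] at key ⊢ <;> revert key <;> decide
  refine ⟨w, hwu', hwv', ?_⟩
  rw [tadj, tadj]
  have h1 : u ≠ w := Ne.symm hwu'
  have h2 : v ≠ w := Ne.symm hwv'
  tauto

private lemma fin3_succ_ne (b : Fin 3) : b + 1 ≠ b := by revert b; decide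

private lemma twin (u v : Fin k → Option (Fin 3)) (hne : u ≠ v)
    (hev : ¬ Odd (dS u v).card) :
    ∃ w, w ≠ u ∧ w ≠ v ∧ ¬((Tgraph k).Adj u w ↔ (Tgraph k).Adj v w) := by
  obtain ⟨j, hj⟩ := Function.ne_iff.mp hne
  rcases hu : u j with _ | a <;> rcases hv : v j with _ | b
  · exact absurd (hu.trans hv.symm) hj
  · -- u j = none, v j = some b; take wj = some (b+1)
    refine step u v j (some (b + 1)) (by rw [hu]; simp) (by rw [hv]; simp [fin3_succ_ne b]) ?_ hev
    rw [hu, hv]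
    have hb : some b ≠ some (b + 1) := by simp [(fin3_succ_ne b).symm]
    simp [hb]
  · -- u j = some a, v j = none; take wj = some (a+1)
    refine step u v j (some (a + 1)) (by rw [hu]; simp [fin3_succ_ne a]) (by rw [hv]; simp) ?_ hev
    rw [hu, hv]
    have ha : some a ≠ some (a + 1) := by simp [(fin3_succ_ne a).symm]
    simp [ha]
  · -- both some; take wj = none
    refine step u v j none (by rw [hu]; simp) (by rw [hv]; simp) ?_ hev
    rw [hu, hv]
    have hab : some b ≠ some a := by rw [← hu, ← hv]; exact (Ne.symm hj)
    simp [hab]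

end AuxT

section AuxCover

private lemma card_le_of_cover {V : Type*} [Fintype V] (G : SimpleGraph V) {b : ℕ}
    (B : Fin b → Finset V × Finset V) (hB : IsOddCover G B)
    (htwin : ∀ u v : V, u ≠ v → ¬ G.Adj u v →
      ∃ w, w ≠ u ∧ w ≠ v ∧ ¬(G.Adj u w ↔ G.Adj v w)) :
    Fintype.card V ≤ 3 ^ b := by
  classical
  set sig : V → (Fin b → Fin 3) := fun v i =>
    if v ∈ (B i).1 then 0 else if v ∈ (B i).2 then 1 else 2 with hsig
  have hinj : Function.Injective sig := by
    intro u v huv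
    by_contra hne
    have hmem : ∀ i, (u ∈ (B i).1 ↔ v ∈ (B i).1) ∧ (u ∈ (B i).2 ↔ v ∈ (B i).2) := by
      intro i
      have h : sig u i = sig v i := congrFun huv i
      have hu12 : u ∈ (B i).1 → u ∉ (B i).2 := fun hx => Finset.disjoint_left.mp (hB.1 i) hx
      have hv12 : v ∈ (B i).1 → v ∉ (B i).2 := fun hx => Finset.disjoint_left.mp (hB.1 i) hx
      rw [hsig] at h
      simp only at h
      split_ifs at h <;> first | exact absurd h (by decide) | tauto
    have hnadj : ¬ G.Adj u v := by
      rw [hB.2 u v hne]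
      rw [Finset.filter_false_of_mem (fun i _ => ?_)]
      · simp
      · intro hcond
        rcases hcond with ⟨h1, h2⟩ | ⟨h1, h2⟩
        · exact Finset.disjoint_left.mp (hB.1 i) ((hmem i).1.mpr ((hmem i).1.mp h1)) ((hmem i).2.mpr h2) |>.elim
        · exact Finset.disjoint_left.mp (hB.1 i) h2 ((hmem i).2.mp h1) |>.elim
    obtain ⟨w, hw1, hw2, hw3⟩ := htwin u v hne hnadj
    apply hw3
    rw [hB.2 u w (Ne.symm hw1), hB.2 v w (Ne.symm hw2)]
    have hfe : (Finset.univ.filter (fun i : Fin b =>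
        (u ∈ (B i).1 ∧ w ∈ (B i).2) ∨ (u ∈ (B i).2 ∧ w ∈ (B i).1)))
        = (Finset.univ.filter (fun i : Fin b =>
        (v ∈ (B i).1 ∧ w ∈ (B i).2) ∨ (v ∈ (B i).2 ∧ w ∈ (B i).1))) := by
      apply Finset.filter_congr
      intro i _
      have h := hmem i
      tauto
    rw [hfe]
  calc Fintype.card V ≤ Fintype.card (Fin b → Fin 3) := Fintype.card_le_of_injective sig hinj
    _ = 3 ^ b := by simp [Fintype.card_fun]

private lemma exists_cover {V : Type*} [Fintype V] (G : SimpleGraph V) :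
    ∃ n : ℕ, ∃ B : Fin n → Finset V × Finset V, IsOddCover G B := by
  classical
  set m := G.edgeFinset.card with hm
  set e : Fin m → Sym2 V := fun i => (G.edgeFinset.equivFin.symm i : Sym2 V) with he
  have hemem : ∀ i, e i ∈ G.edgeFinset := fun i => (G.edgeFinset.equivFin.symm i).2
  have hrep : ∀ i : Fin m, ∃ ab : V × V, e i = s(ab.1, ab.2) := fun i =>
    (e i).inductionOn (fun x y => ⟨(x, y), rfl⟩)
  choose p hp using hrep
  have hpne : ∀ i, (p i).1 ≠ (p i).2 := by
    intro i
    have h1 : e i ∈ G.edgeSet := SimpleGraph.mem_edgeFinset.mp (hemem i)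
    have h2 := SimpleGraph.not_isDiag_of_mem_edgeSet G h1
    rw [hp i] at h2
    simpa [Sym2.mk_isDiag_iff] using h2
  refine ⟨m, fun i => ({(p i).1}, {(p i).2}), fun i => Finset.disjoint_singleton.mpr (hpne i), ?_⟩
  intro u v huv
  have hcond : ∀ i : Fin m,
      ((u ∈ ({(p i).1} : Finset V) ∧ v ∈ ({(p i).2} : Finset V)) ∨
       (u ∈ ({(p i).2} : Finset V) ∧ v ∈ ({(p i).1} : Finset V))) ↔ e i = s(u, v) := by
    intro i
    rw [hp i, Sym2.eq_iff]
    simp only [Finset.mem_singleton]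
    constructor
    · rintro (⟨h1, h2⟩ | ⟨h1, h2⟩)
      · exact Or.inl ⟨h1.symm, h2.symm⟩
      · exact Or.inr ⟨h2.symm, h1.symm⟩
    · rintro (⟨h1, h2⟩ | ⟨h1, h2⟩)
      · exact Or.inl ⟨h1.symm, h2.symm⟩
      · exact Or.inr ⟨h2.symm, h1.symm⟩
  rw [Finset.filter_congr (fun i _ => hcond i)]
  by_cases hA : G.Adj u v
  · have hedge : s(u, v) ∈ G.edgeFinset := by
      rw [SimpleGraph.mem_edgeFinset, SimpleGraph.mem_edgeSet]; exact hA
    have hfil : (Finset.univ.filter (fun i : Fin m => e i = s(u, v)))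
        = {G.edgeFinset.equivFin ⟨s(u, v), hedge⟩} := by
      ext i
      simp only [Finset.mem_filter, Finset.mem_univ, true_and, Finset.mem_singleton]
      constructor
      · intro h
        have : G.edgeFinset.equivFin.symm i = ⟨s(u, v), hedge⟩ := Subtype.ext h
        rw [← this, Equiv.apply_symm_apply]
      · intro h
        rw [he]
        simp only
        rw [h, Equiv.symm_apply_apply]
    rw [hfil]
    simpa using hA
  · have hfil : (Finset.univ.filter (fun i : Fin m => e i = s(u, v))) = ∅ := by
      apply Finset.filter_false_of_mem
      intro i _ h
      apply hA
      rw [← SimpleGraph.mem_edgeSet, ← h, ← SimpleGraph.mem_edgeFinset]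
      exact hemem i
    rw [hfil]
    simpa using hA

end AuxCover

theorem stmt3 (k : ℕ) (hk : 0 < k) :
    Real.logb 3 4 * k ≤ (b2 (Tgraph k) : ℝ) ∧ 4 ^ k ≤ 3 ^ b2 (Tgraph k) := by
  classical
  have hmem : b2 (Tgraph k) ∈ {n : ℕ | ∃ B : Fin n → Finset (Fin k → Option (Fin 3)) × Finset (Fin k → Option (Fin 3)), IsOddCover (Tgraph k) B} := by
    apply Nat.sInf_mem
    obtain ⟨n, B, hB⟩ := exists_cover (Tgraph k)
    exact ⟨n, B, hB⟩
  obtain ⟨B, hB⟩ := hmem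
  have htwin : ∀ u v : Fin k → Option (Fin 3), u ≠ v → ¬ (Tgraph k).Adj u v →
      ∃ w, w ≠ u ∧ w ≠ v ∧ ¬((Tgraph k).Adj u w ↔ (Tgraph k).Adj v w) := by
    intro u v hne hnadj
    apply twin u v hne
    intro hodd
    exact hnadj ((tadj u v).mpr ⟨hne, hodd⟩)
  have hcard := card_le_of_cover (Tgraph k) B hB htwin
  have hcardV : Fintype.card (Fin k → Option (Fin 3)) = 4 ^ k := by
    simp [Fintype.card_fun]
  have h2 : 4 ^ k ≤ 3 ^ b2 (Tgraph k) := by rw [← hcardV]; exact hcard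
  refine ⟨?_, h2⟩
  have h3 : ((4 : ℝ)) ^ k ≤ (3 : ℝ) ^ b2 (Tgraph k) := by exact_mod_cast h2
  have h4 : Real.logb 3 ((4 : ℝ) ^ k) ≤ Real.logb 3 ((3 : ℝ) ^ b2 (Tgraph k)) :=
    Real.logb_le_logb_of_le (by norm_num) (by positivity) h3
  rw [Real.logb_pow, Real.logb_pow, Real.logb_self_eq_one (by norm_num)] at h4
  calc Real.logb 3 4 * k = k * Real.logb 3 4 := mul_comm _ _
    _ ≤ (b2 (Tgraph k) : ℝ) * 1 := h4
    _ = _ := mul_one _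
end

section
/- For every positive integer k, the 2-rank of the graph T_k equals 2k; that is, r₂(T_k) = 2k. -/
open scoped Classical

namespace TAux
open Matrix

def g (a : Option (Fin 3)) : Fin 2 → ZMod 2 :=
  a.elim (fun _ => 0) (fun j => (!![1,0;0,1;1,1] : Matrix (Fin 3) (Fin 2) (ZMod 2)) j)

def h (a : Option (Fin 3)) : Fin 2 → ZMod 2 :=
  a.elim (fun _ => 0) (fun j => (!![0,1;1,0;1,1] : Matrix (Fin 3) (Fin 2) (ZMod 2)) j)

lemma key : ∀ a b : Option (Fin 3),
    (if (a ≠ b ∧ a ≠ none ∧ b ≠ none) then (1 : ZMod 2) else 0)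
      = ∑ t : Fin 2, g a t * h b t := by decide

lemma g_bij : Function.Bijective g := by decide
lemma h_bij : Function.Bijective h := by decide

/-- the "all vectors" matrix -/
def U (k : ℕ) : Matrix ((Fin k × Fin 2) → ZMod 2) (Fin k × Fin 2) (ZMod 2) :=
  Matrix.of fun x j => x j

lemma U_inj (k : ℕ) : Function.Injective (U k).mulVecLin := by
  rw [injective_iff_map_eq_zero]
  intro c hc
  funext j
  have := congrFun hc (Pi.single j 1)
  simp only [Matrix.mulVecLin_apply, Matrix.mulVec, dotProduct, U, Matrix.of_apply,
    Pi.zero_apply] at this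
  rwa [Finset.sum_eq_single j (fun b _ hb => by rw [Pi.single_eq_of_ne hb, zero_mul])
    (by simp), Pi.single_eq_same, one_mul] at this

lemma Ut_surj (k : ℕ) : Function.Surjective (U k)ᵀ.mulVecLin := by
  intro w
  refine ⟨Pi.single w 1, ?_⟩
  funext j
  simp only [Matrix.mulVecLin_apply, Matrix.mulVec, dotProduct, Matrix.transpose_apply,
    U, Matrix.of_apply]
  rw [Finset.sum_eq_single w (fun b _ hb => by rw [Pi.single_eq_of_ne hb, mul_zero])
    (by simp), Pi.single_eq_same, mul_one]

lemma rank_UUt (k : ℕ) : ((U k) * (U k)ᵀ).rank = 2 * k := by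
  rw [Matrix.rank, Matrix.mulVecLin_mul, LinearMap.range_comp,
    LinearMap.range_eq_top.2 (Ut_surj k), Submodule.map_top,
    LinearMap.finrank_range_of_inj (U_inj k),
    Module.finrank_fintype_fun_eq_card]
  simp [Fintype.card_prod, mul_comm]

noncomputable def eg : Option (Fin 3) ≃ (Fin 2 → ZMod 2) := Equiv.ofBijective g g_bij
noncomputable def eh : Option (Fin 3) ≃ (Fin 2 → ZMod 2) := Equiv.ofBijective h h_bij

noncomputable def φ (k : ℕ) : (Fin k → Option (Fin 3)) ≃ (Fin k × Fin 2 → ZMod 2) :=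
  (Equiv.piCongrRight fun _ => eg).trans (Equiv.curry _ _ _).symm

noncomputable def ψ (k : ℕ) : (Fin k → Option (Fin 3)) ≃ (Fin k × Fin 2 → ZMod 2) :=
  (Equiv.piCongrRight fun _ => eh).trans (Equiv.curry _ _ _).symm

lemma φ_apply (k : ℕ) (u : Fin k → Option (Fin 3)) (p : Fin k × Fin 2) :
    φ k u p = g (u p.1) p.2 := rfl

lemma ψ_apply (k : ℕ) (u : Fin k → Option (Fin 3)) (p : Fin k × Fin 2) :
    ψ k u p = h (u p.1) p.2 := rfl

lemma cast_parity (n : ℕ) : (n : ZMod 2) = if Odd n then 1 else 0 := by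
  rw [← ZMod.natCast_mod n 2]
  rcases Nat.even_or_odd n with hpar | hpar
  · rw [Nat.even_iff.1 hpar, if_neg (Nat.not_odd_iff_even.2 hpar)]; simp
  · rw [Nat.odd_iff.1 hpar, if_pos hpar]; simp

end TAux

theorem stmt4 (k : ℕ) (hk : 0 < k) : r2 (Tgraph k) = 2 * k := by
  classical
  have hsym : ∀ w z : Fin k → Option (Fin 3),
      (Finset.univ.filter (fun i => z i ≠ w i ∧ z i ≠ none ∧ w i ≠ none))
        = (Finset.univ.filter (fun i => w i ≠ z i ∧ w i ≠ none ∧ z i ≠ none)) := by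
    intro w z
    apply Finset.filter_congr
    intro i _
    exact ⟨fun ⟨h1, h2, h3⟩ => ⟨h1.symm, h3, h2⟩, fun ⟨h1, h2, h3⟩ => ⟨h1.symm, h3, h2⟩⟩
  have hM : (Matrix.of fun u v : (Fin k → Option (Fin 3)) =>
        if (Tgraph k).Adj u v then (1 : ZMod 2) else 0)
      = ((TAux.U k) * (TAux.U k).transpose).submatrix (TAux.φ k) (TAux.ψ k) := by
    ext u v
    have hrhs : ((TAux.U k) * (TAux.U k).transpose).submatrix (TAux.φ k) (TAux.ψ k) u v
        = ∑ i : Fin k, ∑ t : Fin 2, TAux.g (u i) t * TAux.h (v i) t := by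
      simp only [Matrix.submatrix_apply, Matrix.mul_apply, Matrix.transpose_apply,
        TAux.U, Matrix.of_apply, TAux.φ_apply, TAux.ψ_apply]
      rw [Fintype.sum_prod_type]
    rw [Matrix.of_apply, hrhs]
    have hkey : ∑ i : Fin k, ∑ t : Fin 2, TAux.g (u i) t * TAux.h (v i) t
        = ∑ i : Fin k, (if (u i ≠ v i ∧ u i ≠ none ∧ v i ≠ none) then (1 : ZMod 2) else 0) := by
      exact Finset.sum_congr rfl fun i _ => (TAux.key (u i) (v i)).symm
    rw [hkey, Finset.sum_boole]
    rw [TAux.cast_parity]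
    by_cases huv : u = v
    · subst huv
      simp [SimpleGraph.irrefl, Finset.filter_false_of_mem, Nat.odd_iff]
    · have hadj : (Tgraph k).Adj u v ↔ Odd ((Finset.univ.filter
          (fun i => u i ≠ v i ∧ u i ≠ none ∧ v i ≠ none)).card) := by
        rw [Tgraph, SimpleGraph.fromRel_adj]
        rw [hsym u v]
        simp [huv]
      simp only [hadj]
  rw [r2, hM, Matrix.rank_submatrix, TAux.rank_UUt]
end

section
/- For every positive integer k, the disjoint union of k triangles admits an odd cover of cardinality k+1; that is, b₂(kK₃) ≤ k+1. -/
open scoped Classical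

/-- `kK₃`: the disjoint union of `k` triangles, on the vertex set `Fin k × Fin 3`;
two distinct vertices are adjacent iff they lie in the same triangle. -/
def kK3 (k : ℕ) : SimpleGraph (Fin k × Fin 3) :=
  SimpleGraph.fromRel (fun u v => u.1 = v.1)

def OCX (k : ℕ) : Fin (k+1) → Finset (Fin k × Fin 3) × Finset (Fin k × Fin 3) :=
  fun t =>
    if _ : (t : ℕ) < k then
      (Finset.univ.filter (fun p => (p.1 : ℕ) = (t : ℕ) ∧ (p.2 : ℕ) ≠ 2),
       Finset.univ.filter (fun p => ((p.1 : ℕ) = (t : ℕ) ∧ (p.2 : ℕ) = 2) ∨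
         ((p.1 : ℕ) ≠ (t : ℕ) ∧ (p.2 : ℕ) = 0)))
    else
      (Finset.univ.filter (fun p => (p.2 : ℕ) = 1),
       Finset.univ.filter (fun p => (p.2 : ℕ) = 0))

theorem filt_eq {α : Type*} {p : α → Prop} (h1 : DecidablePred p) [h2 : DecidablePred p]
    (s : Finset α) : @Finset.filter α p h1 s = @Finset.filter α p h2 s := by
  congr!

theorem stmt6 (k : ℕ) (hk : 0 < k) : b2 (kK3 k) ≤ k + 1 := by
  apply Nat.sInf_le
  refine ⟨OCX k, ?_, ?_⟩
  · intro t
    rw [Finset.disjoint_left]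
    intro p hp hq
    by_cases ht : (t : ℕ) < k <;>
      simp only [OCX, ht, dite_true, dite_false, dif_pos, dif_neg, not_false_iff,
        Finset.mem_filter, Finset.mem_univ, true_and] at hp hq <;> omega
  · intro u v huv
    have hAdj : (kK3 k).Adj u v ↔ u.1 = v.1 := by
      constructor
      · rintro ⟨-, h | h⟩
        · exact h
        · exact h.symm
      · exact fun h => ⟨huv, Or.inl h⟩
    rw [hAdj]
    obtain ⟨i, r⟩ := u
    obtain ⟨j, s⟩ := v
    have hi := i.isLt
    have hr := r.isLt
    have hs := s.isLt
    by_cases hij : i = j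
    · subst hij
      have hrs : (r : ℕ) ≠ (s : ℕ) := by
        intro h
        exact huv (by rw [Fin.val_injective h])
      have hfil : (Finset.univ.filter (fun t : Fin (k+1) =>
          ((i,r) ∈ (OCX k t).1 ∧ (i,s) ∈ (OCX k t).2) ∨
          ((i,r) ∈ (OCX k t).2 ∧ (i,s) ∈ (OCX k t).1))) =
          {if (r : ℕ) = 2 ∨ (s : ℕ) = 2 then i.castSucc else Fin.last k} := by
        ext t
        have ht' := t.isLt
        rw [Finset.mem_filter, Finset.mem_singleton]
        by_cases ht : (t : ℕ) < k <;>
          split_ifs <;>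
          simp only [OCX, ht, dite_true, dite_false, Finset.mem_filter, Finset.mem_univ,
            true_and, Fin.ext_iff, Fin.coe_castSucc, Fin.val_last] <;>
          omega
      rw [filt_eq, hfil, Finset.card_singleton]
      exact iff_of_true rfl (by decide)
    · have hij' : (i : ℕ) ≠ (j : ℕ) := fun h => hij (Fin.val_injective h)
      have hj := j.isLt
      refine iff_of_false (by simpa using hij) ?_
      have hfil : (Finset.univ.filter (fun t : Fin (k+1) =>
          ((i,r) ∈ (OCX k t).1 ∧ (j,s) ∈ (OCX k t).2) ∨
          ((i,r) ∈ (OCX k t).2 ∧ (j,s) ∈ (OCX k t).1))) =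
          (if (r : ℕ) = 0 ∧ (s : ℕ) = 0 then {i.castSucc, j.castSucc}
           else if (r : ℕ) = 0 ∧ (s : ℕ) = 1 then {j.castSucc, Fin.last k}
           else if (r : ℕ) = 1 ∧ (s : ℕ) = 0 then {i.castSucc, Fin.last k}
           else ∅) := by
        ext t
        have ht' := t.isLt
        rw [Finset.mem_filter]
        by_cases ht : (t : ℕ) < k <;>
          split_ifs <;>
          simp only [OCX, ht, dite_true, dite_false, Finset.mem_filter, Finset.mem_univ,
            true_and, Finset.mem_insert, Finset.mem_singleton, Finset.notMem_empty,
            Fin.ext_iff, Fin.coe_castSucc, Fin.val_last, iff_false] <;>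
          omega
      rw [filt_eq, hfil]
      have hne1 : i.castSucc ≠ j.castSucc := by simp [Fin.ext_iff, hij']
      have hne2 : ∀ m : Fin k, m.castSucc ≠ Fin.last k := fun m => (Fin.castSucc_lt_last m).ne
      split_ifs <;>
        first
          | (rw [Finset.card_pair (by simp [hne1, hne2])]; decide)
          | (rw [Finset.card_empty]; decide)
end

section
/- For every forest F (a finite simple graph with no cycles), the minimum cardinality of an odd cover of F equals the maximum size of a matching in F; that is, b₂(F) = m(F). -/
open scoped Classical

/-- The maximum size of a matching in `G`. -/
noncomputable def maxMatchingSize {V : Type*} [Fintype V] (G : SimpleGraph V) : ℕ :=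
  sSup {n : ℕ | ∃ M : G.Subgraph, M.IsMatching ∧ M.edgeSet.ncard = n}

/-!
Upper bound: a forest with an edge has a leaf `u`, with neighbour `v`; deleting the edges at `v`
lowers the matching number, so by induction a forest has a vertex cover `C` with `|C| ≤ m(F)`.
An odd cover of the graph without the edges at `c` extends by the star `({c}, N(c))`, so every
vertex cover `C` yields an odd cover by `|C|` bicliques.

Lower bound: an odd cover by `k` bicliques `(Xᵢ, Yᵢ)` writes the adjacency matrix over `𝔽₂` as
`XYᵀ + YXᵀ`, of rank at most `2k`. For a matching `M` of a forest, the principal submatrix on the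
matched vertices is invertible: in the forest they induce, a leaf `u` is matched to its only
neighbour `c`, so in a vanishing combination of rows the columns `u` and `c` force the
coefficients of `c` and `u` to vanish, and the pair can be removed. Hence the rank is at least
`2|M|`.
-/

open Matrix

namespace SimpleGraph

variable {V : Type*} {G : SimpleGraph V}

theorem IsAcyclic.exists_adj_forall_adj_eq [Finite V] (hG : G.IsAcyclic) {a b : V}
    (hab : G.Adj a b) : ∃ u v, G.Adj u v ∧ ∀ w, G.Adj u w → w = v := by
  have : Nonempty V := ⟨a⟩
  obtain ⟨u, v, p, hp, hmax⟩ := Walk.exists_isPath_forall_isPath_length_le_length G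
  have hnil : ¬p.Nil := fun hnil => by
    simpa [hnil.length_eq_zero] using hmax _ _ _ (Walk.IsPath.of_adj hab)
  refine ⟨u, p.snd, p.adj_snd hnil, fun w hw => hG.eq_snd_of_adj_start hp hw ?_⟩
  by_contra hw'
  simpa using hmax _ _ _ (hp.cons (h := hw.symm) hw')

theorem Subgraph.IsMatching.ncard_verts [Finite V] {M : G.Subgraph} (hM : M.IsMatching) :
    M.verts.ncard = 2 * M.edgeSet.ncard := by
  have := Fintype.ofFinite V
  calc M.verts.ncard = Nat.card (Σ e, hM.toEdge ⁻¹' {e}) :=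
        (Nat.card_coe_set_eq _).symm.trans (Nat.card_congr (Equiv.sigmaFiberEquiv hM.toEdge).symm)
    _ = ∑ e : M.edgeSet, 2 := by
      rw [Nat.card_sigma]
      refine Finset.sum_congr rfl fun ⟨e, he⟩ _ => ?_
      induction e using Sym2.ind with
      | _ x y =>
        rw [hM.toEdge_preimage_singleton he, Nat.card_coe_set_eq, Set.ncard_pair]
        simpa using he.ne
    _ = 2 * M.edgeSet.ncard := by
      rw [Finset.sum_const, smul_eq_mul, mul_comm, Finset.card_univ, ← Nat.card_eq_fintype_card,
        Nat.card_coe_set_eq]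

section MaxMatchingSize

variable [Fintype V]

theorem bddAbove_matchingSizes :
    BddAbove {n : ℕ | ∃ M : G.Subgraph, M.IsMatching ∧ M.edgeSet.ncard = n} :=
  ⟨Nat.card (Sym2 V), by
    rintro _ ⟨M, -, rfl⟩
    exact Set.ncard_le_card _⟩

theorem Subgraph.IsMatching.ncard_edgeSet_le_maxMatchingSize {M : G.Subgraph}
    (hM : M.IsMatching) : M.edgeSet.ncard ≤ maxMatchingSize G :=
  le_csSup bddAbove_matchingSizes (⟨M, hM, rfl⟩ : ∃ _, _)

theorem exists_isMatching_ncard_edgeSet_eq_maxMatchingSize (G : SimpleGraph V) :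
    ∃ M : G.Subgraph, M.IsMatching ∧ M.edgeSet.ncard = maxMatchingSize G :=
  Nat.sSup_mem (h₂ := bddAbove_matchingSizes)
    ⟨0, by exact ⟨⊥, fun _ hv => hv.elim, by simp⟩⟩

theorem maxMatchingSize_deleteIncidenceSet_lt {u v : V} (huv : G.Adj u v)
    (hu : ∀ w, G.Adj u w → w = v) :
    maxMatchingSize (G.deleteIncidenceSet v) < maxMatchingSize G := by
  obtain ⟨M, hM, hMsize⟩ :=
    exists_isMatching_ncard_edgeSet_eq_maxMatchingSize (G.deleteIncidenceSet v)
  have hMuv : ∀ x ∈ M.verts, x ≠ u ∧ x ≠ v := fun x hx => by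
    obtain ⟨y, hxy, -⟩ := hM hx
    obtain ⟨hxy, hxv, hyv⟩ := deleteIncidenceSet_adj.mp (M.adj_sub hxy)
    exact ⟨by rintro rfl; exact hyv (hu y hxy), hxv⟩
  let M' := M.map (Hom.ofLE (G.deleteIncidenceSet_le v)) ⊔ G.subgraphOfAdj huv
  have hM' : M'.IsMatching := by
    refine (hM.map_ofLE _).sup (.subgraphOfAdj huv) ?_
    rw [(hM.map_ofLE _).support_eq_verts, (Subgraph.IsMatching.subgraphOfAdj huv).support_eq_verts]
    simpa [Set.disjoint_right] using
      ⟨fun hu => (hMuv u hu).1 rfl, fun hv => (hMuv v hv).2 rfl⟩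
  have hM'size : M'.edgeSet.ncard = M.edgeSet.ncard + 1 := by
    simp only [M', Subgraph.edgeSet_sup, Subgraph.edgeSet_map, edgeSet_subgraphOfAdj, Hom.coe_ofLE,
      id_eq, Sym2.map_id', Set.image_id', Set.union_singleton]
    exact Set.ncard_insert_of_notMem (fun h => (hMuv u (M.edge_vert h)).1 rfl) (Set.toFinite _)
  have := hM'.ncard_edgeSet_le_maxMatchingSize
  omega

theorem IsAcyclic.exists_isVertexCover_card_le_maxMatchingSize (hG : G.IsAcyclic) :
    ∃ C : Finset V, G.IsVertexCover C ∧ C.card ≤ maxMatchingSize G := by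
  induction G using WellFoundedLT.induction with
  | _ G ih =>
  by_cases hbot : G = ⊥
  · exact ⟨∅, by simp [hbot], by simp⟩
  obtain ⟨a, b, hab⟩ : ∃ a b, G.Adj a b := by simpa [eq_bot_iff_forall_not_adj] using hbot
  obtain ⟨u, v, huv, hu⟩ := hG.exists_adj_forall_adj_eq hab
  have hlt : G.deleteIncidenceSet v < G :=
    lt_of_le_of_ne (G.deleteIncidenceSet_le v) fun h =>
      (deleteIncidenceSet_adj.mp (h.symm ▸ huv : (G.deleteIncidenceSet v).Adj u v)).2.2 rfl
  obtain ⟨C, hC, hCsize⟩ := ih _ hlt (hG.anti hlt.le)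
  refine ⟨insert v C, fun x y hxy => ?_, ?_⟩
  · by_cases hx : x = v; · simp [hx]
    by_cases hy : y = v; · simp [hy]
    simpa [hx, hy] using hC (deleteIncidenceSet_adj.mpr ⟨hxy, hx, hy⟩)
  · have := maxMatchingSize_deleteIncidenceSet_lt huv hu
    have := Finset.card_insert_le v C
    omega

end MaxMatchingSize

theorem IsAcyclic.exists_adj_forall_mem_adj_eq [Finite V] (hG : G.IsAcyclic) (M : G.Subgraph)
    {S : Finset V} (hS : ∀ x ∈ S, ∃ y ∈ S, M.Adj x y) (hne : S.Nonempty) :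
    ∃ u ∈ S, ∃ c ∈ S, M.Adj u c ∧ ∀ w ∈ S, G.Adj u w → w = c := by
  obtain ⟨x, hx⟩ := hne
  obtain ⟨y, hy, hxy⟩ := hS x hx
  let H : SimpleGraph V := ((⊤ : G.Subgraph).induce S).spanningCoe
  have hH {x y : V} : H.Adj x y ↔ x ∈ S ∧ y ∈ S ∧ G.Adj x y := by simp [H]
  obtain ⟨u, c, huc, hu⟩ := (hG.anti (Subgraph.spanningCoe_le _)).exists_adj_forall_adj_eq
    (hH.mpr ⟨hx, hy, M.adj_sub hxy⟩)
  obtain ⟨huS, hcS, -⟩ := hH.mp huc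
  replace hu : ∀ w ∈ S, G.Adj u w → w = c := fun w hw h => hu w (hH.mpr ⟨huS, hw, h⟩)
  obtain ⟨y, hyS, huy⟩ := hS u huS
  exact ⟨u, huS, c, hcS, hu y hyS (M.adj_sub huy) ▸ huy, hu⟩

theorem Subgraph.IsMatching.forall_exists_adj_erase_erase {M : G.Subgraph} (hM : M.IsMatching)
    {S : Finset V} (hS : ∀ x ∈ S, ∃ y ∈ S, M.Adj x y) {u c : V} (huc : M.Adj u c) :
    ∀ x ∈ (S.erase u).erase c, ∃ y ∈ (S.erase u).erase c, M.Adj x y := by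
  intro x hx
  simp only [Finset.mem_erase] at hx ⊢
  obtain ⟨y, hyS, hxy⟩ := hS x hx.2.2
  refine ⟨y, ⟨?_, ?_, hyS⟩, hxy⟩
  · rintro rfl; exact hx.2.1 (hM.eq_of_adj_right hxy huc)
  · rintro rfl; exact hx.1 (hM.eq_of_adj_left hxy.symm huc)

variable [Fintype V]

theorem IsAcyclic.linearIndepOn_row_submatrix_adjMatrix {R : Type*} [Ring R]
    (hG : G.IsAcyclic) {M : G.Subgraph} (hM : M.IsMatching) (S : Finset V)
    (hS : ∀ x ∈ S, ∃ y ∈ S, M.Adj x y) :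
    LinearIndepOn R ((G.adjMatrix R).submatrix id ((↑) : S → V)).row S := by
  induction S using Finset.strongInduction with
  | H S ih =>
  rcases S.eq_empty_or_nonempty with rfl | hne
  · simp
  obtain ⟨u, huS, c, hcS, huc, hu⟩ := hG.exists_adj_forall_mem_adj_eq M hS hne
  have ih' := ih ((S.erase u).erase c)
    ((Finset.erase_subset c _).trans_ssubset (Finset.erase_ssubset huS))
    (hM.forall_exists_adj_erase_erase hS huc)
  rw [linearIndepOn_finset_iff] at ih' ⊢
  intro f hf
  replace hf : ∀ w ∈ S, ∑ x ∈ S, f x * G.adjMatrix R x w = 0 := fun w hw => by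
    simpa [Finset.sum_apply] using congrFun hf ⟨w, hw⟩
  have hGuc := M.adj_sub huc
  have hfc : f c = 0 := by
    have := hf u huS
    rwa [Finset.sum_eq_single c (fun b hb hbc => ?_) (absurd hcS), adjMatrix_apply,
      if_pos hGuc.symm, mul_one] at this
    rw [adjMatrix_apply, if_neg fun h => hbc (hu b hb h.symm), mul_zero]
  have hf' : ∀ x ∈ (S.erase u).erase c, f x = 0 := by
    refine ih' f (funext fun w => ?_)
    have hw : (w : V) ∈ (S.erase u).erase c := w.2
    have hwS : (w : V) ∈ S := Finset.mem_of_mem_erase (Finset.mem_of_mem_erase hw)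
    have := hf w hwS
    rw [← Finset.add_sum_erase S _ huS,
      ← Finset.add_sum_erase (S.erase u) _ (Finset.mem_erase.mpr ⟨hGuc.ne.symm, hcS⟩), hfc,
      adjMatrix_apply, if_neg fun h => Finset.ne_of_mem_erase hw (hu w hwS h)] at this
    simpa [Finset.sum_apply] using this
  have hfu : f u = 0 := by
    have := hf c hcS
    rwa [Finset.sum_eq_single u (fun b hb hbu => ?_) (absurd huS), adjMatrix_apply,
      if_pos hGuc, mul_one] at this
    by_cases hbc : b = c
    · rw [hbc, hfc, zero_mul]
    · rw [hf' b (Finset.mem_erase.mpr ⟨hbc, Finset.mem_erase.mpr ⟨hbu, hb⟩⟩), zero_mul]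
  intro x hx
  by_cases hxu : x = u; · rwa [hxu]
  by_cases hxc : x = c; · rwa [hxc]
  exact hf' x (Finset.mem_erase.mpr ⟨hxc, Finset.mem_erase.mpr ⟨hxu, hx⟩⟩)

theorem IsAcyclic.ncard_verts_le_rank_adjMatrix {K : Type*} [Field K] (hG : G.IsAcyclic)
    {M : G.Subgraph} (hM : M.IsMatching) : M.verts.ncard ≤ (G.adjMatrix K).rank := by
  have h := hG.linearIndepOn_row_submatrix_adjMatrix (R := K) hM M.verts.toFinset
    fun x hx => by
      obtain ⟨y, hxy, -⟩ := hM (Set.mem_toFinset.mp hx)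
      exact ⟨y, Set.mem_toFinset.mpr hxy.snd_mem, hxy⟩
  calc M.verts.ncard = Fintype.card (M.verts.toFinset : Set V) := by
        simp [Set.ncard_eq_toFinset_card']
    _ = ((G.adjMatrix K).submatrix (Subtype.val : ↥(M.verts.toFinset : Set V) → V)
          Subtype.val).rank := (LinearIndependent.rank_matrix h).symm
    _ ≤ (G.adjMatrix K).rank := rank_submatrix_le _ _ _

end SimpleGraph

open SimpleGraph

section

variable {V : Type*} [Fintype V] {G : SimpleGraph V} {k : ℕ} {B : Fin k → Finset V × Finset V}

namespace IsOddCover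

theorem cons_star (c : V) (hB : IsOddCover (G.deleteIncidenceSet c) B) :
    IsOddCover G (Fin.cons ({c}, Finset.univ.filter (G.Adj c)) B) := by
  refine ⟨Fin.cases (by simp) (by simpa using hB.1), fun u v huv => ?_⟩
  rw [Finset.card_filter, Fin.sum_univ_succ, ← Finset.card_filter]
  simp only [Fin.cons_zero, Fin.cons_succ, Finset.mem_singleton, Finset.mem_filter,
    Finset.mem_univ, true_and]
  have := hB.2 u v huv
  rw [deleteIncidenceSet_adj] at this
  generalize Finset.card _ = n at this ⊢
  split_ifs <;> grind [Nat.odd_add_one, G.adj_comm]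

theorem adjMatrix_apply_eq_sum (hB : IsOddCover G B) (u v : V) :
    G.adjMatrix (ZMod 2) u v =
      ∑ i, ((if u ∈ (B i).1 then 1 else 0) * (if v ∈ (B i).2 then 1 else 0)
        + (if u ∈ (B i).2 then 1 else 0) * (if v ∈ (B i).1 then 1 else 0)) := by
  have hdisj (w : V) i : ¬(w ∈ (B i).1 ∧ w ∈ (B i).2) := fun h =>
    Finset.disjoint_left.mp (hB.1 i) h.1 h.2
  have hcount : G.adjMatrix (ZMod 2) u v = ((Finset.univ.filter fun i : Fin k =>
      (u ∈ (B i).1 ∧ v ∈ (B i).2) ∨ (u ∈ (B i).2 ∧ v ∈ (B i).1)).card : ZMod 2) := by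
    rcases eq_or_ne u v with rfl | huv
    · simp [hdisj, and_comm]
    · rw [adjMatrix_apply, hB.2 u v huv]
      split_ifs with h
      · exact (ZMod.natCast_eq_one_iff_odd.mpr h).symm
      · exact (ZMod.natCast_eq_zero_iff_even.mpr (Nat.not_odd_iff_even.mp h)).symm
  rw [hcount, Finset.card_filter, Nat.cast_sum]
  refine Finset.sum_congr rfl fun i _ => ?_
  push_cast
  grind

theorem r2_le (hB : IsOddCover G B) : r2 G ≤ 2 * k := by
  let P : Matrix V (Fin k ⊕ Fin k) (ZMod 2) := Matrix.of fun v =>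
    Sum.elim (fun i => if v ∈ (B i).1 then 1 else 0) (fun i => if v ∈ (B i).2 then 1 else 0)
  let Q : Matrix V (Fin k ⊕ Fin k) (ZMod 2) := Matrix.of fun v =>
    Sum.elim (fun i => if v ∈ (B i).2 then 1 else 0) (fun i => if v ∈ (B i).1 then 1 else 0)
  have hPQ : G.adjMatrix (ZMod 2) = P * Qᵀ := by
    ext u v
    rw [hB.adjMatrix_apply_eq_sum, mul_apply, Fintype.sum_sum_type, ← Finset.sum_add_distrib]
    rfl
  calc r2 G = (P * Qᵀ).rank := congrArg Matrix.rank hPQ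
    _ ≤ P.rank := rank_mul_le_left _ _
    _ ≤ Fintype.card (Fin k ⊕ Fin k) := rank_le_card_width _
    _ = 2 * k := by simp [two_mul]

end IsOddCover

theorem exists_isOddCover_of_isVertexCover (C : Finset V) (G : SimpleGraph V)
    (hC : G.IsVertexCover C) : ∃ B : Fin C.card → Finset V × Finset V, IsOddCover G B := by
  induction C using Finset.induction_on generalizing G with
  | empty =>
    obtain rfl : G = ⊥ := by simpa using hC
    rw [Finset.card_empty]
    exact ⟨Fin.elim0, fun i => i.elim0, by simp⟩
  | insert c C hc ih =>
    have hC' : (G.deleteIncidenceSet c).IsVertexCover C := fun x y hxy => by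
      obtain ⟨hxy, hxc, hyc⟩ := deleteIncidenceSet_adj.mp hxy
      simpa [hxc, hyc] using hC hxy
    obtain ⟨B, hB : IsOddCover _ B⟩ := ih _ hC'
    rw [Finset.card_insert_of_notMem hc]
    exact ⟨_, hB.cons_star c⟩

end

theorem stmt7 {V : Type*} [Fintype V] (F : SimpleGraph V) (hF : F.IsAcyclic) :
    b2 F = maxMatchingSize F := by
  obtain ⟨C, hC, hCsize⟩ := hF.exists_isVertexCover_card_le_maxMatchingSize
  have hC_mem : C.card ∈ {k | ∃ B : Fin k → Finset V × Finset V, IsOddCover F B} :=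
    exists_isOddCover_of_isVertexCover C F hC
  have hb2_le : b2 F ≤ C.card := Nat.sInf_le hC_mem
  obtain ⟨B, hB⟩ : ∃ B : Fin (b2 F) → Finset V × Finset V, IsOddCover F B :=
    Nat.sInf_mem ⟨_, hC_mem⟩
  obtain ⟨M, hM, hMsize⟩ := exists_isMatching_ncard_edgeSet_eq_maxMatchingSize F
  have hM_le : M.verts.ncard ≤ r2 F := hF.ncard_verts_le_rank_adjMatrix hM
  have := hB.r2_le
  have := hM.ncard_verts
  omega
end

section
/- If G is a finite simple bipartite graph, then 2·b₂(G) = r₂(G). Furthermore, if V(G) = A ∪ B is a bipartition of G (A and B disjoint and every edge of G has one endpoint in A and one in B), then there exists an odd cover of G of cardinality b₂(G) = r₂(G)/2 that respects the bipartition: every biclique (X,Y) in the cover satisfies X ⊆ A and Y ⊆ B, or X ⊆ B and Y ⊆ A. -/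
open scoped Classical

/-!
Over `𝔽₂`, an odd cover `(X_i, Y_i)_{i < k}` of `G` is the same as a factorization of the
adjacency matrix `N = X Yᵀ + Y Xᵀ`, where `X` and `Y` are the `V × k` incidence matrices of the
parts; the right-hand side factors through `𝔽₂^(2k)`, so `r₂(G) ≤ 2 b₂(G)`.

For a bipartition `A ⊔ B`, write `N = P + Pᵀ` with `P` the `A × B` block of `N`. A rank
factorization `P = X Yᵀ` through `𝔽₂^(rank P)`, with the rows of `X` cut down to `A` and those of
`Y` to `B`, is an odd cover of size `rank P` respecting the bipartition. Conversely the columns of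
`P` and of `Pᵀ` are columns of `N` with disjoint supports, so `r₂(G) ≥ 2 rank P`.
-/

open Matrix

theorem Matrix.exists_rank_factorization {m n K : Type*} [Field K] [Fintype n]
    (M : Matrix m n K) :
    ∃ (X : Matrix m (Fin M.rank) K) (Y : Matrix (Fin M.rank) n K), M = X * Y := by
  let W := Submodule.span K (Set.range Mᵀ)
  have : FiniteDimensional K W := FiniteDimensional.span_of_finite K (Set.finite_range _)
  let b : Module.Basis (Fin M.rank) K W :=
    Module.finBasisOfFinrankEq K W M.rank_eq_finrank_span_cols.symm
  have hcol : ∀ j, Mᵀ j ∈ W := fun j => Submodule.subset_span ⟨j, rfl⟩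
  refine ⟨of fun u i => (b i : m → K) u, of fun i j => b.repr ⟨Mᵀ j, hcol j⟩ i, ?_⟩
  ext u j
  have := congrArg (fun w : W => (w : m → K) u) (b.sum_repr ⟨Mᵀ j, hcol j⟩)
  simp only [Submodule.coe_sum, SetLike.val_smul, Finset.sum_apply, Pi.smul_apply,
    smul_eq_mul] at this
  simpa [mul_apply, mul_comm] using this.symm

theorem Matrix.rank_add_rank_le_of_disjoint_range {l m n o K : Type*} [Field K] [Fintype m]
    [Fintype n] [Fintype o] {M : Matrix l m K} {P : Matrix l n K} {Q : Matrix l o K}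
    (hP : LinearMap.range P.mulVecLin ≤ LinearMap.range M.mulVecLin)
    (hQ : LinearMap.range Q.mulVecLin ≤ LinearMap.range M.mulVecLin)
    (hPQ : Disjoint (LinearMap.range P.mulVecLin) (LinearMap.range Q.mulVecLin)) :
    P.rank + Q.rank ≤ M.rank := by
  unfold Matrix.rank
  rw [← Submodule.finrank_sup_add_finrank_inf_eq, hPQ.eq_bot, finrank_bot, add_zero]
  exact Submodule.finrank_mono (sup_le hP hQ)

theorem ZMod.ite_one_zero_eq_natCast_iff (p : Prop) [Decidable p] (n : ℕ) :
    (if p then 1 else 0 : ZMod 2) = n ↔ (p ↔ Odd n) := by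
  by_cases hp : p <;>
    simp [hp, eq_comm, ZMod.natCast_eq_one_iff_odd, ZMod.natCast_eq_zero_iff_even]

section OddCover

variable {V : Type*} {k : ℕ}

noncomputable def incidence {ι : Type*} (s : ι → Finset V) : Matrix V ι (ZMod 2) :=
  of fun u i => if u ∈ s i then 1 else 0

theorem incidence_mul_transpose_add_apply (C : Fin k → Finset V × Finset V)
    (hC : ∀ i, Disjoint (C i).1 (C i).2) (u v : V) :
    (incidence (Prod.fst ∘ C) * (incidence (Prod.snd ∘ C))ᵀ +
        incidence (Prod.snd ∘ C) * (incidence (Prod.fst ∘ C))ᵀ) u v =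
      (Finset.univ.filter fun i =>
        (u ∈ (C i).1 ∧ v ∈ (C i).2) ∨ (u ∈ (C i).2 ∧ v ∈ (C i).1)).card := by
  rw [Finset.natCast_card_filter]
  simp only [Matrix.add_apply, mul_apply, transpose_apply, incidence, of_apply,
    Function.comp_apply, ← Finset.sum_add_distrib]
  refine Finset.sum_congr rfl fun i _ => ?_
  have hu : u ∈ (C i).1 → u ∉ (C i).2 := fun h => Finset.disjoint_left.mp (hC i) h
  have hv : v ∈ (C i).1 → v ∉ (C i).2 := fun h => Finset.disjoint_left.mp (hC i) h
  split_ifs <;> simp_all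

variable [Fintype V] {G : SimpleGraph V}

theorem incidence_support {ι : Type*} (Z : Matrix V ι (ZMod 2)) :
    incidence (fun i => Finset.univ.filter (Z · i ≠ 0)) = Z := by
  have : ∀ x : ZMod 2, (if x ≠ 0 then 1 else 0) = x := by decide
  ext u i
  simp [incidence, this]

theorem isOddCover_iff (C : Fin k → Finset V × Finset V) :
    IsOddCover G C ↔ (∀ i, Disjoint (C i).1 (C i).2) ∧
      G.adjMatrix (ZMod 2) = incidence (Prod.fst ∘ C) * (incidence (Prod.snd ∘ C))ᵀ +
        incidence (Prod.snd ∘ C) * (incidence (Prod.fst ∘ C))ᵀ := by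
  refine and_congr_right fun hC => ?_
  rw [← Matrix.ext_iff]
  simp only [incidence_mul_transpose_add_apply C hC, SimpleGraph.adjMatrix_apply]
  refine forall_congr' fun u => forall_congr' fun v => ?_
  by_cases huv : u = v
  · subst huv
    have hempty : ∀ i, ¬((u ∈ (C i).1 ∧ u ∈ (C i).2) ∨ (u ∈ (C i).2 ∧ u ∈ (C i).1)) := by
      intro i
      have hu : u ∈ (C i).1 → u ∉ (C i).2 := fun h => Finset.disjoint_left.mp (hC i) h
      tauto
    simp [hempty]
  · simp [huv, ZMod.ite_one_zero_eq_natCast_iff]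

theorem IsOddCover.r2_le_s9 {C : Fin k → Finset V × Finset V} (hC : IsOddCover G C) :
    r2 G ≤ 2 * k := by
  change (G.adjMatrix (ZMod 2)).rank ≤ 2 * k
  rw [((isOddCover_iff C).mp hC).2, ← fromCols_mul_fromRows]
  calc _ ≤ Fintype.card (Fin k ⊕ Fin k) := (rank_mul_le_left _ _).trans (rank_le_card_width _)
    _ = 2 * k := by simp [two_mul]

theorem b2_eq_of_isOddCover {C : Fin k → Finset V × Finset V} (hC : IsOddCover G C)
    (hk : 2 * k ≤ r2 G) : b2 G = k :=
  le_antisymm (Nat.sInf_le ⟨C, hC⟩) <|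
    le_csInf ⟨k, C, hC⟩ fun _ ⟨_, hC'⟩ => by linarith [hC'.r2_le_s9]

end OddCover

section Bipartite

variable {V : Type*} [Fintype V] {G : SimpleGraph V} {S T : Set V}

noncomputable def coordProj (S : Set V) : Matrix V V (ZMod 2) := diagonal (S.indicator 1)

noncomputable def biadjacency (G : SimpleGraph V) (S T : Set V) : Matrix V V (ZMod 2) :=
  coordProj S * G.adjMatrix (ZMod 2) * coordProj T

theorem coordProj_mul_self (S : Set V) : coordProj S * coordProj S = coordProj S := by
  simp [coordProj, Set.indicator_apply]

theorem mem_of_coordProj_mul_apply_ne_zero {ι : Type*} {Z : Matrix V ι (ZMod 2)} {u : V}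
    {i : ι} (h : (coordProj S * Z) u i ≠ 0) : u ∈ S := by
  by_contra hu
  simp [coordProj, diagonal_mul, hu] at h

theorem disjoint_range_coordProj (h : Disjoint S T) :
    Disjoint (LinearMap.range (coordProj S).mulVecLin)
      (LinearMap.range (coordProj T).mulVecLin) := by
  rw [Submodule.disjoint_def]
  rintro _ ⟨x, rfl⟩ ⟨y, hy⟩
  funext u
  have hyu := congrFun hy u
  by_cases hu : u ∈ S
  · have hu' : u ∉ T := Set.disjoint_left.mp h hu
    simp_all [coordProj, mulVec_diagonal]
  · simp [coordProj, mulVec_diagonal, hu]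

theorem transpose_biadjacency (G : SimpleGraph V) (S T : Set V) :
    (biadjacency G S T)ᵀ = biadjacency G T S := by
  simp [biadjacency, coordProj, transpose_mul, mul_assoc]

theorem coordProj_mul_biadjacency_mul_coordProj (G : SimpleGraph V) (S T : Set V) :
    coordProj S * biadjacency G S T * coordProj T = biadjacency G S T := by
  simp only [biadjacency, ← mul_assoc, coordProj_mul_self]
  rw [mul_assoc _ (coordProj T), coordProj_mul_self]

theorem range_biadjacency_le_range_coordProj (G : SimpleGraph V) (S T : Set V) :
    LinearMap.range (biadjacency G S T).mulVecLin ≤ LinearMap.range (coordProj S).mulVecLin := by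
  rw [biadjacency, mul_assoc, mulVecLin_mul]
  exact LinearMap.range_comp_le_range _ _

theorem adjMatrix_mul_coordProj (h : ∀ u v, G.Adj u v → v ∈ T → u ∈ S) :
    G.adjMatrix (ZMod 2) * coordProj T = biadjacency G S T := by
  ext u v
  simp only [biadjacency, coordProj, mul_diagonal, diagonal_mul, SimpleGraph.adjMatrix_apply,
    Set.indicator_apply, Pi.one_apply]
  by_cases huv : G.Adj u v <;> by_cases hv : v ∈ T <;> simp [huv, hv, h u v]

variable {A B : Set V} (hdisj : Disjoint A B)
  (hbip : ∀ u v : V, G.Adj u v → (u ∈ A ∧ v ∈ B) ∨ (u ∈ B ∧ v ∈ A))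
include hdisj hbip

theorem adjMatrix_mul_coordProj_right :
    G.adjMatrix (ZMod 2) * coordProj B = biadjacency G A B :=
  adjMatrix_mul_coordProj fun u v h hv =>
    (hbip u v h).elim And.left fun h' => absurd h'.2 (Set.disjoint_right.mp hdisj hv)

theorem adjMatrix_mul_coordProj_left :
    G.adjMatrix (ZMod 2) * coordProj A = biadjacency G B A :=
  adjMatrix_mul_coordProj fun u v h hv =>
    (hbip u v h).elim (fun h' => absurd h'.2 (Set.disjoint_left.mp hdisj hv)) And.left

theorem adjMatrix_eq_biadjacency_add_transpose :
    G.adjMatrix (ZMod 2) = biadjacency G A B + (biadjacency G A B)ᵀ := by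
  rw [transpose_biadjacency, ← adjMatrix_mul_coordProj_right hdisj hbip,
    ← adjMatrix_mul_coordProj_left hdisj hbip]
  ext u v
  simp only [Matrix.add_apply, coordProj, mul_diagonal, SimpleGraph.adjMatrix_apply,
    Set.indicator_apply, Pi.one_apply]
  by_cases huv : G.Adj u v
  · rcases hbip u v huv with ⟨-, hv⟩ | ⟨-, hv⟩
    · simp [huv, hv, Set.disjoint_right.mp hdisj hv]
    · simp [huv, hv, Set.disjoint_left.mp hdisj hv]
  · simp [huv]

theorem exists_bipartite_oddCover :
    ∃ C : Fin (biadjacency G A B).rank → Finset V × Finset V, IsOddCover G C ∧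
      ∀ i, ((C i).1 : Set V) ⊆ A ∧ ((C i).2 : Set V) ⊆ B := by
  obtain ⟨X, Y, hXY⟩ := (biadjacency G A B).exists_rank_factorization
  generalize (biadjacency G A B).rank = r at X Y ⊢
  set X' := coordProj A * X
  set Y' := coordProj B * Yᵀ
  have hN : G.adjMatrix (ZMod 2) = X' * Y'ᵀ + Y' * X'ᵀ := by
    have hP : biadjacency G A B = X' * Y'ᵀ := by
      rw [← coordProj_mul_biadjacency_mul_coordProj, hXY]
      simp only [X', Y', transpose_mul, transpose_transpose, coordProj, diagonal_transpose,
        Matrix.mul_assoc]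
    rw [adjMatrix_eq_biadjacency_add_transpose hdisj hbip, hP, transpose_mul X',
      transpose_transpose]
  refine ⟨fun i => (Finset.univ.filter (X' · i ≠ 0), Finset.univ.filter (Y' · i ≠ 0)),
    (isOddCover_iff _).mpr ⟨fun i => ?_, ?_⟩, fun i => ⟨?_, ?_⟩⟩
  · rw [Finset.disjoint_filter]
    exact fun u _ hX hY => Set.disjoint_left.mp hdisj (mem_of_coordProj_mul_apply_ne_zero hX)
      (mem_of_coordProj_mul_apply_ne_zero hY)
  · exact (incidence_support X').symm ▸ (incidence_support Y').symm ▸ hN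
  · exact fun u hu => mem_of_coordProj_mul_apply_ne_zero (Finset.mem_filter.mp hu).2
  · exact fun u hu => mem_of_coordProj_mul_apply_ne_zero (Finset.mem_filter.mp hu).2

theorem two_mul_rank_biadjacency_le_r2 : 2 * (biadjacency G A B).rank ≤ r2 G := by
  have hrange : ∀ {S T : Set V}, G.adjMatrix (ZMod 2) * coordProj T = biadjacency G S T →
      LinearMap.range (biadjacency G S T).mulVecLin ≤
        LinearMap.range (G.adjMatrix (ZMod 2)).mulVecLin := by
    intro S T h
    rw [← h, mulVecLin_mul]
    exact LinearMap.range_comp_le_range _ _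
  calc 2 * (biadjacency G A B).rank
      = (biadjacency G A B).rank + (biadjacency G A B)ᵀ.rank := by rw [rank_transpose]; ring
    _ ≤ (G.adjMatrix (ZMod 2)).rank := by
      rw [transpose_biadjacency]
      exact rank_add_rank_le_of_disjoint_range
        (hrange (adjMatrix_mul_coordProj_right hdisj hbip))
        (hrange (adjMatrix_mul_coordProj_left hdisj hbip))
        ((disjoint_range_coordProj hdisj).mono (range_biadjacency_le_range_coordProj G A B)
          (range_biadjacency_le_range_coordProj G B A))

end Bipartite

theorem stmt9_general {V : Type*} [Fintype V] (G : SimpleGraph V) (A B : Set V)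
    (hdisj : Disjoint A B)
    (hbip : ∀ u v : V, G.Adj u v → (u ∈ A ∧ v ∈ B) ∨ (u ∈ B ∧ v ∈ A)) :
    2 * b2 G = r2 G ∧
    ∃ C : Fin (b2 G) → Finset V × Finset V, IsOddCover G C ∧
      ∀ i, (((C i).1 : Set V) ⊆ A ∧ ((C i).2 : Set V) ⊆ B) ∨
           (((C i).1 : Set V) ⊆ B ∧ ((C i).2 : Set V) ⊆ A) := by
  obtain ⟨C, hC, hCAB⟩ := exists_bipartite_oddCover hdisj hbip
  have hlower := two_mul_rank_biadjacency_le_r2 hdisj hbip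
  have hb2 : b2 G = (biadjacency G A B).rank := b2_eq_of_isOddCover hC hlower
  refine ⟨le_antisymm (hb2 ▸ hlower) (hb2 ▸ hC.r2_le_s9), ?_⟩
  rw [hb2]
  exact ⟨C, hC, fun i => Or.inl (hCAB i)⟩

theorem stmt9 {V : Type*} [Fintype V] (G : SimpleGraph V) (A B : Set V)
    (hdisj : Disjoint A B) (hunion : A ∪ B = Set.univ)
    (hbip : ∀ u v : V, G.Adj u v → (u ∈ A ∧ v ∈ B) ∨ (u ∈ B ∧ v ∈ A)) :
    2 * b2 G = r2 G ∧
    ∃ C : Fin (b2 G) → Finset V × Finset V, IsOddCover G C ∧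
      ∀ i, (((C i).1 : Set V) ⊆ A ∧ ((C i).2 : Set V) ⊆ B) ∨
           (((C i).1 : Set V) ⊆ B ∧ ((C i).2 : Set V) ⊆ A) :=
  stmt9_general G A B hdisj hbip
end

section
/- For every positive integer n, the minimum cardinality of an odd cover of the path P_n on n vertices is ⌊n/2⌋; that is, b₂(P_n) = n/2 if n is even and b₂(P_n) = (n-1)/2 if n is odd. -/
open scoped Classical

/-- The path graph on `n` vertices `0,1,…,n-1`, with `i` adjacent to `j`
iff `|i - j| = 1`. -/
def pathGraphN (n : ℕ) : SimpleGraph (Fin n) :=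
  SimpleGraph.fromRel (fun i j => i.val + 1 = j.val)

/-!
The odd vertices `1, 3, …` of `P_n` form a colour class of its proper 2-colouring, so every edge
lies in exactly one of the `⌊n/2⌋` stars centred at them: these stars are an odd cover.

Conversely, if bicliques `(Xᵢ, Yᵢ)`, `i < k`, form an odd cover of `G`, then over `𝔽₂` the
adjacency matrix of `G` equals `∑ᵢ (xᵢ yᵢᵀ + yᵢ xᵢᵀ)` for the indicator vectors `xᵢ, yᵢ`, so its
rank is at most `2k`. The adjacency matrix of `P_{2m}` is nonsingular over any field: a kernel
vector `y`, extended by zero, satisfies `y₁ = 0`, `y_{2m} = 0` and `y_r + y_{r+2} = 0` for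
`r + 2 ≤ 2m`, hence vanishes. For `m = ⌊n/2⌋` it is a principal submatrix of the adjacency matrix
of `P_n`, whose rank is therefore at least `2⌊n/2⌋`.
-/

open Matrix SimpleGraph

lemma r2_eq_rank_adjMatrix {V : Type*} [Fintype V] (G : SimpleGraph V) :
    r2 G = (G.adjMatrix (ZMod 2)).rank := rfl

section OddCoverRank

variable {V : Type*} [Fintype V] {G : SimpleGraph V} {k : ℕ} {B : Fin k → Finset V × Finset V}

lemma IsOddCover.adj_iff_odd (hB : IsOddCover G B) (u v : V) :
    G.Adj u v ↔ Odd (Finset.univ.filter (fun i : Fin k =>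
      (u ∈ (B i).1 ∧ v ∈ (B i).2) ∨ (u ∈ (B i).2 ∧ v ∈ (B i).1))).card := by
  rcases eq_or_ne u v with rfl | huv
  · have hdisj (i : Fin k) : u ∈ (B i).1 → u ∉ (B i).2 :=
      fun h => Finset.disjoint_left.mp (hB.1 i) h
    rw [Finset.filter_false_of_mem fun i _ => by grind]
    simp
  · exact hB.2 u v huv

noncomputable def membershipMatrix (s : Fin k → Finset V) : Matrix V (Fin k) (ZMod 2) :=
  Matrix.of fun u i => if u ∈ s i then 1 else 0

lemma IsOddCover.adjMatrix_eq (hB : IsOddCover G B) :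
    G.adjMatrix (ZMod 2) =
      membershipMatrix (fun i => (B i).1) * (membershipMatrix (fun i => (B i).2))ᵀ +
        membershipMatrix (fun i => (B i).2) * (membershipMatrix (fun i => (B i).1))ᵀ := by
  ext u v
  have hterm (i : Fin k) :
      (if u ∈ (B i).1 then (1 : ZMod 2) else 0) * (if v ∈ (B i).2 then 1 else 0) +
        (if u ∈ (B i).2 then 1 else 0) * (if v ∈ (B i).1 then 1 else 0) =
      if (u ∈ (B i).1 ∧ v ∈ (B i).2) ∨ (u ∈ (B i).2 ∧ v ∈ (B i).1) then 1 else 0 := by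
    have hdisj : u ∈ (B i).1 → u ∉ (B i).2 := fun h => Finset.disjoint_left.mp (hB.1 i) h
    split_ifs <;> simp_all
  simp only [adjMatrix_apply, Matrix.of_apply, Matrix.add_apply, Matrix.mul_apply,
    Matrix.transpose_apply, membershipMatrix, ← Finset.sum_add_distrib, hterm,
    ← Finset.natCast_card_filter]
  by_cases h : G.Adj u v
  · rw [if_pos h, ZMod.natCast_eq_one_iff_odd.mpr ((hB.adj_iff_odd u v).mp h)]
  · rw [if_neg h, ZMod.natCast_eq_zero_iff_even.mpr
      (Nat.not_odd_iff_even.mp (h ∘ (hB.adj_iff_odd u v).mpr))]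

lemma IsOddCover.r2_le_two_mul (hB : IsOddCover G B) : r2 G ≤ 2 * k := by
  let X := membershipMatrix (fun i => (B i).1)
  let Y := membershipMatrix (fun i => (B i).2)
  calc r2 G = (fromCols X Y * fromRows Yᵀ Xᵀ).rank := by
        rw [fromCols_mul_fromRows, r2_eq_rank_adjMatrix, hB.adjMatrix_eq]
    _ ≤ (fromCols X Y).rank := rank_mul_le_left _ _
    _ ≤ Fintype.card (Fin k ⊕ Fin k) := rank_le_card_width _
    _ = 2 * k := by simp [two_mul]

end OddCoverRank

section PathRank

variable {K : Type*} [Field K]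

def finExtendZero {M : Type*} [Zero M] {N : ℕ} (y : Fin N → M) (j : ℕ) : M :=
  if h : j < N then y ⟨j, h⟩ else 0

lemma sum_ite_val_eq_finExtendZero {M : Type*} [AddCommMonoid M] {N : ℕ} (y : Fin N → M)
    (j : ℕ) : ∑ s : Fin N, (if (s : ℕ) = j then y s else 0) = finExtendZero y j := by
  unfold finExtendZero
  split_ifs with h
  · rw [Finset.sum_eq_single_of_mem ⟨j, h⟩ (Finset.mem_univ _)
      fun s _ hs => if_neg fun h' => hs (Fin.ext h'), if_pos rfl]
  · exact Finset.sum_eq_zero fun s _ => if_neg (by omega)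

lemma pathGraph_adjMatrix_mulVec_zero {N : ℕ} (y : Fin N → K) (h : 0 < N) :
    ((pathGraph N).adjMatrix K *ᵥ y) ⟨0, h⟩ = finExtendZero y 1 := by
  rw [← sum_ite_val_eq_finExtendZero y, mulVec, dotProduct]
  refine Finset.sum_congr rfl fun s _ => ?_
  simp only [adjMatrix_apply, pathGraph_adj]
  split_ifs <;> simp_all

lemma pathGraph_adjMatrix_mulVec_succ {N : ℕ} (y : Fin N → K) (r : ℕ) (h : r + 1 < N) :
    ((pathGraph N).adjMatrix K *ᵥ y) ⟨r + 1, h⟩ =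
      finExtendZero y r + finExtendZero y (r + 2) := by
  rw [← sum_ite_val_eq_finExtendZero y, ← sum_ite_val_eq_finExtendZero y,
    ← Finset.sum_add_distrib, mulVec, dotProduct]
  refine Finset.sum_congr rfl fun s _ => ?_
  simp only [adjMatrix_apply, pathGraph_adj]
  split_ifs <;> simp_all

lemma eq_zero_of_add_apply_add_two_eq_zero {A : Type*} [AddGroup A] {m : ℕ} {Y : ℕ → A}
    (h1 : Y 1 = 0) (h2m : Y (2 * m) = 0) (hrec : ∀ r, r + 2 ≤ 2 * m → Y r + Y (r + 2) = 0)
    {j : ℕ} (hj : j ≤ 2 * m) : Y j = 0 := by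
  have hshift (d : ℕ) : ∀ r, r + 2 * d ≤ 2 * m → (Y r = 0 ↔ Y (r + 2 * d) = 0) := by
    induction d with
    | zero => simp
    | succ d ih =>
      intro r hr
      rw [ih r (by omega), show r + 2 * (d + 1) = r + 2 * d + 2 by ring,
        eq_neg_of_add_eq_zero_right (hrec _ (by omega)), neg_eq_zero]
  obtain ⟨i, rfl | rfl⟩ := Nat.even_or_odd' j
  · refine (hshift (m - i) (2 * i) (by omega)).mpr ?_
    rwa [show 2 * i + 2 * (m - i) = 2 * m by omega]
  · simpa [add_comm] using (hshift i 1 (by omega)).mp h1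

lemma pathGraph_adjMatrix_two_mul_mulVec_injective (m : ℕ) :
    Function.Injective ((pathGraph (2 * m)).adjMatrix K).mulVec := by
  suffices hker : ∀ y, (pathGraph (2 * m)).adjMatrix K *ᵥ y = 0 → y = 0 from
    fun y z h => sub_eq_zero.mp (hker _ (by rw [mulVec_sub, h, sub_self]))
  intro y hy
  have h1 : finExtendZero y 1 = 0 := by
    rcases m.eq_zero_or_pos with rfl | hm
    · simp [finExtendZero]
    · rw [← pathGraph_adjMatrix_mulVec_zero y (by omega), hy, Pi.zero_apply]
  have hrec (r : ℕ) (hr : r + 2 ≤ 2 * m) : finExtendZero y r + finExtendZero y (r + 2) = 0 := by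
    rw [← pathGraph_adjMatrix_mulVec_succ y r (by omega), hy, Pi.zero_apply]
  funext s
  simpa [finExtendZero] using
    eq_zero_of_add_apply_add_two_eq_zero h1 (by simp [finExtendZero]) hrec s.isLt.le

lemma rank_pathGraph_adjMatrix_two_mul (m : ℕ) :
    ((pathGraph (2 * m)).adjMatrix K).rank = 2 * m := by
  rw [rank_of_isUnit _ (mulVec_injective_iff_isUnit.mp
    (pathGraph_adjMatrix_two_mul_mulVec_injective m)), Fintype.card_fin]

lemma two_mul_div_two_le_rank_pathGraph_adjMatrix (n : ℕ) :
    2 * (n / 2) ≤ ((pathGraph n).adjMatrix K).rank := by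
  have hle : 2 * (n / 2) ≤ n := Nat.mul_div_le n 2
  calc 2 * (n / 2) = ((pathGraph (2 * (n / 2))).adjMatrix K).rank :=
        (rank_pathGraph_adjMatrix_two_mul _).symm
    _ = (((pathGraph n).adjMatrix K).submatrix (Fin.castLE hle) (Fin.castLE hle)).rank := by
        congr 1
        ext u v
        simp [adjMatrix_apply, pathGraph_adj]
    _ ≤ ((pathGraph n).adjMatrix K).rank := rank_submatrix_le _ _ _

end PathRank

lemma isOddCover_stars {V : Type*} [Fintype V] (G : SimpleGraph V) {k : ℕ} (c : Fin k → V)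
    (hc : Function.Injective c) (hcol : ∀ u v, G.Adj u v → (u ∈ Set.range c ↔ v ∉ Set.range c)) :
    IsOddCover G (fun i => ({c i}, G.neighborFinset (c i))) := by
  refine ⟨fun i => Finset.disjoint_singleton_left.mpr (G.notMem_neighborFinset_self _),
    fun u v _ => ?_⟩
  have hsep (i : Fin k) : ((u ∈ ({c i} : Finset V) ∧ v ∈ G.neighborFinset (c i)) ∨
      (u ∈ G.neighborFinset (c i) ∧ v ∈ ({c i} : Finset V))) ↔
      G.Adj u v ∧ (c i = u ∨ c i = v) := by
    simp only [Finset.mem_singleton, mem_neighborFinset]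
    constructor
    · rintro (⟨rfl, h⟩ | ⟨h, rfl⟩)
      exacts [⟨h, Or.inl rfl⟩, ⟨h.symm, Or.inr rfl⟩]
    · rintro ⟨h, rfl | rfl⟩
      exacts [Or.inl ⟨rfl, h⟩, Or.inr ⟨h.symm, rfl⟩]
  simp only [hsep]
  by_cases hadj : G.Adj u v
  · obtain ⟨i₀, hi₀⟩ : ∃ i₀, ∀ i, (c i = u ∨ c i = v) ↔ i = i₀ := by
      by_cases hu : u ∈ Set.range c
      · obtain ⟨i₀, rfl⟩ := hu
        have hv : ∀ i, c i ≠ v := fun i hi => (hcol _ v hadj).mp ⟨i₀, rfl⟩ ⟨i, hi⟩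
        exact ⟨i₀, fun i => by simp [hc.eq_iff, hv]⟩
      · obtain ⟨i₀, rfl⟩ := not_not.mp (mt (hcol u v hadj).mpr hu)
        have hu' : ∀ i, c i ≠ u := fun i hi => hu ⟨i, hi⟩
        exact ⟨i₀, fun i => by simp [hc.eq_iff, hu']⟩
    simp [hadj, hi₀, Finset.filter_eq']
  · simp [hadj]

lemma exists_isOddCover_pathGraph (n : ℕ) :
    ∃ B : Fin (n / 2) → Finset (Fin n) × Finset (Fin n), IsOddCover (pathGraph n) B := by
  let c : Fin (n / 2) → Fin n := fun i => ⟨2 * i + 1, by omega⟩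
  have hrange (v : Fin n) : v ∈ Set.range c ↔ v.val % 2 = 1 := by
    refine ⟨?_, fun hv => ⟨⟨v / 2, by omega⟩, Fin.ext (by simp only [c]; omega)⟩⟩
    rintro ⟨i, rfl⟩
    simp [c]
  refine ⟨_, isOddCover_stars _ c (fun i j h => ?_) fun u v huv => ?_⟩
  · simpa [c, Fin.ext_iff] using h
  · rw [hrange, hrange]
    rw [pathGraph_adj] at huv
    omega

lemma pathGraphN_eq_pathGraph (n : ℕ) : pathGraphN n = pathGraph n := by
  ext u v
  rw [pathGraphN, fromRel_adj, pathGraph_adj]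
  exact ⟨And.right, fun h => ⟨fun huv => by subst huv; omega, h⟩⟩

theorem stmt11_general (n : ℕ) : b2 (pathGraphN n) = n / 2 := by
  rw [pathGraphN_eq_pathGraph]
  obtain ⟨B, hB⟩ := exists_isOddCover_pathGraph n
  refine le_antisymm (Nat.sInf_le ⟨B, hB⟩) (le_csInf ⟨_, B, hB⟩ ?_)
  rintro k ⟨B', hB'⟩
  have hrank := two_mul_div_two_le_rank_pathGraph_adjMatrix (K := ZMod 2) n
  rw [← r2_eq_rank_adjMatrix] at hrank
  have hcover := hB'.r2_le_two_mul
  omega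

theorem stmt11 (n : ℕ) (hn : 0 < n) : b2 (pathGraphN n) = n / 2 :=
  stmt11_general n
end

section
/- For every integer k ≥ 1, the minimum cardinality of an odd cover of the complete graph on 2k+1 vertices satisfies b₂(K_{2k+1}) ≥ k + 1. -/
open scoped Classical

namespace Stmt15Aux

open Finset

variable {n : ℕ}

/-- indicator vector of a finset, over 𝔽₂ -/
def chi (s : Finset (Fin n)) (v : Fin n) : ZMod 2 := if v ∈ s then 1 else 0

/-- the linear functional `f ↦ ∑ v, f v * w v` -/
def dotL (w : Fin n → ZMod 2) : (Fin n → ZMod 2) →ₗ[ZMod 2] ZMod 2 where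
  toFun f := ∑ v, f v * w v
  map_add' f g := by simp [add_mul, Finset.sum_add_distrib]
  map_smul' c f := by simp [Finset.mul_sum, mul_assoc]

@[simp] lemma dotL_apply (w f : Fin n → ZMod 2) : dotL w f = ∑ v, f v * w v := rfl

lemma sum_mul_chi_single (f : Fin n → ZMod 2) (v : Fin n) :
    ∑ u, f u * chi {v} u = f v := by
  simp [chi, Finset.mem_singleton, mul_ite, mul_one, mul_zero, Finset.sum_ite_eq']

lemma chi_single_mul (f : Fin n → ZMod 2) (v : Fin n) :
    ∑ u, chi {v} u * f u = f v := by
  rw [show (∑ u, chi {v} u * f u) = ∑ u, f u * chi {v} u from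
    Finset.sum_congr rfl fun u _ => mul_comm _ _]
  exact sum_mul_chi_single f v

lemma odd_natCast {c : ℕ} (h : Odd c) : (c : ZMod 2) = 1 := by
  obtain ⟨t, rfl⟩ := h
  push_cast
  rw [show ((2 : ZMod 2)) = 0 by decide]
  ring

lemma triple_comm {α : Type*} [AddCommMonoid α] {a b c : ℕ}
    (F : Fin a → Fin b → Fin c → α) :
    ∑ u, ∑ v, ∑ i, F u v i = ∑ i, ∑ u, ∑ v, F u v i := by
  calc ∑ u, ∑ v, ∑ i, F u v i
      = ∑ u, ∑ i, ∑ v, F u v i := Finset.sum_congr rfl fun u _ => Finset.sum_comm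
    _ = ∑ i, ∑ u, ∑ v, F u v i := Finset.sum_comm

/-- the key lower bound -/
lemma key {k m : ℕ} (hk : 1 ≤ k)
    (B : Fin m → Finset (Fin (2 * k + 1)) × Finset (Fin (2 * k + 1)))
    (hB : IsOddCover (⊤ : SimpleGraph (Fin (2 * k + 1))) B) : k + 1 ≤ m := by
  obtain ⟨hdisj, hadj⟩ := hB
  by_contra hcon
  push_neg at hcon
  have hmk : m ≤ k := by omega
  -- pointwise disjointness
  have hd0 : ∀ (i : Fin m) (v : Fin (2 * k + 1)),
      chi (B i).1 v * chi (B i).2 v = 0 := by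
    intro i v
    by_cases h : v ∈ (B i).1
    · have h2 : v ∉ (B i).2 := Finset.disjoint_left.mp (hdisj i) h
      simp [chi, h, h2]
    · simp [chi, h]
  -- pointwise matrix identity over 𝔽₂
  have hM : ∀ u v : Fin (2 * k + 1), (if u = v then (0 : ZMod 2) else 1)
      = ∑ i, (chi (B i).1 u * chi (B i).2 v + chi (B i).2 u * chi (B i).1 v) := by
    intro u v
    by_cases huv : u = v
    · subst huv
      rw [if_pos rfl, eq_comm]
      refine Finset.sum_eq_zero fun i _ => ?_
      have h2 : ∀ a b : ZMod 2, a * b + b * a = 0 := by decide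
      exact h2 _ _
    · rw [if_neg huv]
      have hodd := (hadj u v huv).mp (by simp [huv])
      have hterm : ∀ i : Fin m,
          chi (B i).1 u * chi (B i).2 v + chi (B i).2 u * chi (B i).1 v
            = if ((u ∈ (B i).1 ∧ v ∈ (B i).2) ∨ (u ∈ (B i).2 ∧ v ∈ (B i).1))
              then 1 else 0 := by
        intro i
        have h1 := Finset.disjoint_left.mp (hdisj i)
        by_cases a : u ∈ (B i).1 <;> by_cases b : u ∈ (B i).2 <;>
          by_cases c : v ∈ (B i).1 <;> by_cases d : v ∈ (B i).2 <;>
          first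
            | exact absurd b (h1 a)
            | exact absurd d (h1 c)
            | simp [chi, a, b, c, d]
      rw [eq_comm]
      calc ∑ i, (chi (B i).1 u * chi (B i).2 v + chi (B i).2 u * chi (B i).1 v)
          = ∑ i, if ((u ∈ (B i).1 ∧ v ∈ (B i).2) ∨ (u ∈ (B i).2 ∧ v ∈ (B i).1))
              then (1 : ZMod 2) else 0 := Finset.sum_congr rfl fun i _ => hterm i
        _ = ((Finset.univ.filter (fun i : Fin m =>
              (u ∈ (B i).1 ∧ v ∈ (B i).2) ∨ (u ∈ (B i).2 ∧ v ∈ (B i).1))).card : ZMod 2) :=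
            by rw [Finset.sum_boole]
        _ = 1 := by
            have h2 : Odd (Finset.univ.filter (fun i : Fin m =>
                (u ∈ (B i).1 ∧ v ∈ (B i).2) ∨ (u ∈ (B i).2 ∧ v ∈ (B i).1))).card := by
              convert hodd using 2
              ext i
              simp [Finset.mem_filter]
            exact odd_natCast h2
  -- master identity
  have master : ∀ f g : Fin (2 * k + 1) → ZMod 2,
      (∑ v, f v) * (∑ v, g v) + ∑ v, f v * g v
        = ∑ i, ((∑ v, f v * chi (B i).1 v) * (∑ v, g v * chi (B i).2 v)
              + (∑ v, f v * chi (B i).2 v) * (∑ v, g v * chi (B i).1 v)) := by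
    intro f g
    have e0 : ∀ u v : Fin (2 * k + 1),
        (if u = v then (0 : ZMod 2) else 1) = 1 + (if u = v then 1 else 0) := by
      intro u v; split <;> decide
    have lhs : ∑ u, ∑ v, f u * g v * (if u = v then (0 : ZMod 2) else 1)
        = (∑ v, f v) * (∑ v, g v) + ∑ v, f v * g v := by
      simp_rw [e0, mul_add, mul_one, Finset.sum_add_distrib]
      congr 1
      · rw [Finset.sum_mul_sum]
      · simp [mul_ite, mul_zero]
    have rhs : ∑ u, ∑ v, f u * g v * (if u = v then (0 : ZMod 2) else 1)
        = ∑ i, ((∑ v, f v * chi (B i).1 v) * (∑ v, g v * chi (B i).2 v)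
              + (∑ v, f v * chi (B i).2 v) * (∑ v, g v * chi (B i).1 v)) := by
      have expand : ∀ u v : Fin (2 * k + 1),
          f u * g v * (if u = v then (0 : ZMod 2) else 1)
            = ∑ i, (f u * chi (B i).1 u * (g v * chi (B i).2 v)
                  + f u * chi (B i).2 u * (g v * chi (B i).1 v)) := by
        intro u v
        rw [hM u v, Finset.mul_sum]
        exact Finset.sum_congr rfl fun i _ => by ring
      simp_rw [expand]
      rw [triple_comm]
      refine Finset.sum_congr rfl fun i _ => ?_
      rw [Finset.sum_mul_sum, Finset.sum_mul_sum, ← Finset.sum_add_distrib]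
      refine Finset.sum_congr rfl fun u _ => ?_
      rw [← Finset.sum_add_distrib]
    rw [← lhs, rhs]
  -- the linear map recording all inner products
  set T : (Fin (2 * k + 1) → ZMod 2) →ₗ[ZMod 2]
      ((Fin m → ZMod 2) × ((Fin m → ZMod 2) × ZMod 2)) :=
    (LinearMap.pi fun i => dotL (chi (B i).1)).prod
      ((LinearMap.pi fun i => dotL (chi (B i).2)).prod (dotL fun _ => 1)) with hT
  have hTapp : ∀ f, T f = (fun i => ∑ v, f v * chi (B i).1 v,
      (fun i => ∑ v, f v * chi (B i).2 v, ∑ v, f v)) := by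
    intro f
    simp [hT, LinearMap.prod_apply, LinearMap.pi_apply, dotL_apply, Pi.prod,
      Prod.ext_iff, funext_iff]
  have hinj : Function.Injective T := by
    rw [injective_iff_map_eq_zero]
    intro f hf
    rw [hTapp f,
      show (0 : (Fin m → ZMod 2) × ((Fin m → ZMod 2) × ZMod 2)) = (0, (0, 0)) from rfl,
      Prod.mk.injEq, Prod.mk.injEq] at hf
    obtain ⟨hf1a, hf2a, hf3a⟩ := hf
    have hf1 : ∀ i, ∑ v, f v * chi (B i).1 v = 0 := fun i => congrFun hf1a i
    have hf2 : ∀ i, ∑ v, f v * chi (B i).2 v = 0 := fun i => congrFun hf2a i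
    have hf3 : ∑ v, f v = 0 := hf3a
    funext v
    have hm := master f (chi {v})
    rw [hf3, zero_mul, zero_add, sum_mul_chi_single] at hm
    rw [hm]
    refine Finset.sum_eq_zero fun i _ => ?_
    rw [hf1 i, hf2 i, zero_mul, zero_mul, add_zero]
  -- dimension count
  have hle := LinearMap.finrank_le_finrank_of_injective hinj
  simp only [Module.finrank_fin_fun, Module.finrank_prod, Module.finrank_self] at hle
  have hmeq : m = k := by omega
  subst hmeq
  -- surjectivity
  have hdim : Module.finrank (ZMod 2) (Fin (2 * m + 1) → ZMod 2)
      = Module.finrank (ZMod 2) ((Fin m → ZMod 2) × ((Fin m → ZMod 2) × ZMod 2)) := by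
    simp only [Module.finrank_fin_fun, Module.finrank_prod, Module.finrank_self]
    omega
  have hsurj : Function.Surjective T :=
    (LinearMap.injective_iff_surjective_of_finrank_eq_finrank hdim).mp hinj
  -- pick the dual vector of y (i₀)
  have hm1 : 1 ≤ m := hk
  set i₀ : Fin m := ⟨0, by omega⟩ with hi₀
  obtain ⟨g₀, hg₀⟩ := hsurj (fun _ => 0, (fun i => if i = i₀ then 1 else 0, 0))
  rw [hTapp g₀, Prod.mk.injEq, Prod.mk.injEq] at hg₀
  obtain ⟨hg1a, hg2a, hg3a⟩ := hg₀
  have hg1 : ∀ i, ∑ v, g₀ v * chi (B i).1 v = 0 := fun i => congrFun hg1a i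
  have hg2 : ∀ i, ∑ v, g₀ v * chi (B i).2 v = if i = i₀ then 1 else 0 :=
    fun i => congrFun hg2a i
  have hg3 : ∑ v, g₀ v = 0 := hg3a
  -- g₀ = chi (B i₀).1
  have hkey : ∀ v, g₀ v = chi (B i₀).1 v := by
    intro v
    have hm' := master (chi {v}) g₀
    rw [hg3, mul_zero, zero_add, chi_single_mul] at hm'
    rw [hm']
    have : ∀ i : Fin m,
        (∑ u, chi {v} u * chi (B i).1 u) * (∑ u, g₀ u * chi (B i).2 u)
          + (∑ u, chi {v} u * chi (B i).2 u) * (∑ u, g₀ u * chi (B i).1 u)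
        = if i = i₀ then chi (B i).1 v else 0 := by
      intro i
      rw [hg1 i, hg2 i, mul_zero, add_zero, chi_single_mul]
      by_cases h : i = i₀ <;> simp [h]
    rw [Finset.sum_congr rfl fun i _ => this i, Finset.sum_ite_eq']
    simp
  -- contradiction: ⟨x i₀, y i₀⟩ = 1 but the parts are disjoint
  have h1 : (1 : ZMod 2) = ∑ v, g₀ v * chi (B i₀).2 v := by
    rw [hg2 i₀]; simp
  have h2 : ∑ v, g₀ v * chi (B i₀).2 v = ∑ v, chi (B i₀).1 v * chi (B i₀).2 v :=
    Finset.sum_congr rfl fun v _ => by rw [hkey v]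
  have h3 : ∑ v, chi (B i₀).1 v * chi (B i₀).2 v = 0 :=
    Finset.sum_eq_zero fun v _ => hd0 i₀ v
  rw [h2, h3] at h1
  exact (by decide : (1 : ZMod 2) ≠ 0) h1

/-- explicit odd cover of the complete graph by stars -/
def coverB (n : ℕ) : Fin n → Finset (Fin n) × Finset (Fin n) :=
  fun i => ({i}, Finset.univ.filter (fun v => i < v))

lemma coverB_isOddCover (n : ℕ) :
    IsOddCover (⊤ : SimpleGraph (Fin n)) (coverB n) := by
  constructor
  · intro i
    simp only [coverB, Finset.disjoint_left, Finset.mem_singleton, Finset.mem_filter]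
    rintro a rfl ⟨-, h⟩
    exact lt_irrefl _ h
  · intro u v huv
    refine iff_of_true (by simpa using huv) ?_
    rcases lt_or_gt_of_ne huv with h | h
    · have h1 : Odd (({u} : Finset (Fin n)).card) := by simp
      convert h1 using 2
      ext i
      simp only [coverB, Finset.mem_filter, Finset.mem_univ, true_and,
        Finset.mem_singleton, Fin.ext_iff, Fin.lt_def]
      have hlt : (u : ℕ) < v := h
      omega
    · have h1 : Odd (({v} : Finset (Fin n)).card) := by simp
      convert h1 using 2
      ext i
      simp only [coverB, Finset.mem_filter, Finset.mem_univ, true_and,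
        Finset.mem_singleton, Fin.ext_iff, Fin.lt_def]
      have hlt : (v : ℕ) < u := h
      omega

end Stmt15Aux

theorem stmt15 (k : ℕ) (hk : 1 ≤ k) :
    k + 1 ≤ b2 (⊤ : SimpleGraph (Fin (2 * k + 1))) := by
  refine le_csInf ⟨2 * k + 1, Stmt15Aux.coverB (2 * k + 1),
    Stmt15Aux.coverB_isOddCover (2 * k + 1)⟩ ?_
  rintro m ⟨B, hB⟩
  exact Stmt15Aux.key hk B hB
end

section
/- Let k ≥ 1 and let A and B be disjoint subsets of the vertex set of the complete graph K_{2k+1} on 2k+1 vertices. Let G be the complete bipartite graph on the vertex set of K_{2k+1} whose edges are all pairs {a,b} with a ∈ A and b ∈ B. Then the 2-rank of the symmetric difference graph satisfies r₂(K_{2k+1} △ G) = 2k. -/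
open scoped Classical

private lemma key1 : ∀ p q s a b ca cb : ZMod 2, ca * cb = 0 → a = p*(s+b) →
    b = q*(s+a) → p*b + q*a = 0 →
    s + ca*b + cb*a = (s + p*q*a) * ((1 + p*q) + q*ca + p*cb) := by decide

private lemma key2 : ∀ p q ca cb : ZMod 2, ca * cb = 0 →
    ((1+p*q) + q*p + p*q) + ((1 + p*q) + q*ca + p*cb)
      + ca*((1+p*q)*q + p*q) + cb*((1+p*q)*p + q*p) = 0 := by decide

private lemma key3 : ∀ p q : ZMod 2,
    ((1+p*q) + q*p + p*q) + p*q*((1+p*q)*p + q*p) = 1 := by decide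

theorem stmt16 (k : ℕ) (hk : 1 ≤ k)
    (A B : Finset (Fin (2 * k + 1))) (hAB : Disjoint A B) :
    r2 (symmDiff (⊤ : SimpleGraph (Fin (2 * k + 1)))
      (SimpleGraph.fromRel (fun u v => u ∈ A ∧ v ∈ B))) = 2 * k := by
  have hdisj : ∀ u : Fin (2*k+1), u ∈ A → u ∈ B → False :=
    fun u h1 h2 => Finset.disjoint_left.mp hAB h1 h2
  have h2z : (2 : ZMod 2) = 0 := by decide
  set χA : Fin (2*k+1) → ZMod 2 := fun u => if u ∈ A then 1 else 0 with hχA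
  set χB : Fin (2*k+1) → ZMod 2 := fun u => if u ∈ B then 1 else 0 with hχB
  have hAA : ∀ u, χA u * χA u = χA u := by
    intro u; simp only [hχA]; split_ifs <;> ring
  have hBB : ∀ u, χB u * χB u = χB u := by
    intro u; simp only [hχB]; split_ifs <;> ring
  have hABz : ∀ u, χA u * χB u = 0 := by
    intro u
    by_cases h1 : u ∈ A
    · by_cases h2 : u ∈ B
      · exact (hdisj u h1 h2).elim
      · simp [hχA, hχB, h1, h2]
    · simp [hχA, hχB, h1]
  set p : ZMod 2 := ∑ u, χA u with hp
  set q : ZMod 2 := ∑ u, χB u with hq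
  unfold r2
  set M : Matrix (Fin (2*k+1)) (Fin (2*k+1)) (ZMod 2) :=
    Matrix.of fun u v => if (symmDiff (⊤ : SimpleGraph (Fin (2 * k + 1)))
      (SimpleGraph.fromRel (fun u v => u ∈ A ∧ v ∈ B))).Adj u v then 1 else 0 with hM
  have hcard : ((2*k+1 : ℕ) : ZMod 2) = 1 := by
    push_cast
    rw [h2z]
    ring
  have hadj : ∀ u v : Fin (2*k+1),
      (symmDiff (⊤ : SimpleGraph (Fin (2 * k + 1)))
        (SimpleGraph.fromRel (fun u v => u ∈ A ∧ v ∈ B))).Adj u v ↔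
      (u ≠ v ∧ ¬((u ∈ A ∧ v ∈ B) ∨ (v ∈ A ∧ u ∈ B))) := by
    intro u v
    rw [symmDiff_def]
    simp only [SimpleGraph.sup_adj, SimpleGraph.sdiff_adj, SimpleGraph.top_adj,
      SimpleGraph.fromRel_adj, ne_eq]
    tauto
  -- entries of M
  have hMentry : ∀ u v, M u v =
      (1 + (if u = v then 1 else 0)) + (χA u * χB v + χA v * χB u) := by
    intro u v
    have hM1 : M u v = if (u ≠ v ∧ ¬((u ∈ A ∧ v ∈ B) ∨ (v ∈ A ∧ u ∈ B))) then 1 else 0 := by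
      simp only [hM, Matrix.of_apply]
      exact if_congr (hadj u v) rfl rfl
    rw [hM1]
    by_cases huv : u = v
    · subst huv
      rw [if_neg (by tauto), if_pos rfl, hABz u]
      decide
    · rw [if_congr (and_iff_right huv) rfl rfl, if_neg huv]
      simp only [hχA, hχB]
      by_cases h1 : u ∈ A <;> by_cases h2 : v ∈ A <;> by_cases h3 : u ∈ B <;>
        by_cases h4 : v ∈ B <;>
        first
          | exact (hdisj _ h1 h3).elim
          | exact (hdisj _ h2 h4).elim
          | (simp only [h1, h2, h3, h4, and_self, and_true, and_false, true_and,
              false_and, true_or, or_true, or_false, false_or, not_true, not_false_iff,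
              if_true, if_false, ite_true, ite_false, not_false_eq_true]
             try decide)
  -- mulVec formula
  have hmv : ∀ x : Fin (2*k+1) → ZMod 2, ∀ u, M.mulVec x u =
      (∑ v, x v) + x u + χA u * (∑ v, χB v * x v) + χB u * (∑ v, χA v * x v) := by
    intro x u
    have h0 : M.mulVec x u = ∑ v, M u v * x v := rfl
    rw [h0]
    rw [Finset.sum_congr rfl fun v _ => by rw [hMentry u v]]
    have expand : ∀ v : Fin (2*k+1),
        ((1 + (if u = v then 1 else 0)) + (χA u * χB v + χA v * χB u)) * x v
        = x v + (if u = v then 1 else 0) * x v + χA u * (χB v * x v)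
          + χB u * (χA v * x v) := by intro v; ring
    rw [Finset.sum_congr rfl fun v _ => expand v]
    rw [Finset.sum_add_distrib, Finset.sum_add_distrib, Finset.sum_add_distrib,
      ← Finset.mul_sum, ← Finset.mul_sum]
    have hid : ∑ v, (if u = v then (1 : ZMod 2) else 0) * x v = x u := by
      simp
    rw [hid]
  -- the special kernel vector
  set v0 : Fin (2*k+1) → ZMod 2 := fun u => (1 + p*q) + q * χA u + p * χB u with hv0
  have hsum_v0 : ∑ u, v0 u = (1+p*q) + q*p + p*q := by
    simp only [hv0]
    rw [Finset.sum_add_distrib, Finset.sum_add_distrib, ← Finset.mul_sum, ← Finset.mul_sum,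
      Finset.sum_const, Finset.card_univ, Fintype.card_fin, nsmul_eq_mul, hcard, ← hp, ← hq]
    ring
  have hA_v0 : ∑ u, χA u * v0 u = (1+p*q)*p + q*p := by
    have h1 : ∀ u, χA u * v0 u = (1+p*q) * χA u + q * χA u := by
      intro u
      simp only [hv0]
      calc χA u * ((1 + p*q) + q * χA u + p * χB u)
          = (1+p*q) * χA u + q * (χA u * χA u) + p * (χA u * χB u) := by ring
        _ = (1+p*q) * χA u + q * χA u := by rw [hAA u, hABz u]; ring
    rw [Finset.sum_congr rfl fun u _ => h1 u, Finset.sum_add_distrib,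
      ← Finset.mul_sum, ← Finset.mul_sum, ← hp]
  have hB_v0 : ∑ u, χB u * v0 u = (1+p*q)*q + p*q := by
    have h1 : ∀ u, χB u * v0 u = (1+p*q) * χB u + p * χB u := by
      intro u
      simp only [hv0]
      calc χB u * ((1 + p*q) + q * χA u + p * χB u)
          = (1+p*q) * χB u + q * (χA u * χB u) + p * (χB u * χB u) := by ring
        _ = (1+p*q) * χB u + p * χB u := by rw [hBB u, hABz u]; ring
    rw [Finset.sum_congr rfl fun u _ => h1 u, Finset.sum_add_distrib,
      ← Finset.mul_sum, ← Finset.mul_sum, ← hq]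
  have hv0_ker : M.mulVec v0 = 0 := by
    funext u
    rw [hmv v0 u, hsum_v0, hA_v0, hB_v0]
    simp only [hv0, Pi.zero_apply]
    linear_combination key2 p q (χA u) (χB u) (hABz u)
  have hv0_ne : v0 ≠ 0 := by
    intro h
    have h1 : ∑ u, v0 u = 0 := by rw [h]; simp
    have h2 : ∑ u, χA u * v0 u = 0 := by rw [h]; simp
    have h3 := key3 p q
    rw [← hsum_v0, ← hA_v0, h1, h2] at h3
    simp at h3
  -- kernel is spanned by v0
  have hker : LinearMap.ker M.mulVecLin = Submodule.span (ZMod 2) {v0} := by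
    apply le_antisymm
    · intro x hx
      rw [LinearMap.mem_ker, Matrix.mulVecLin_apply] at hx
      set s : ZMod 2 := ∑ u, x u with hs
      set α : ZMod 2 := ∑ u, χA u * x u with hα
      set β : ZMod 2 := ∑ u, χB u * x u with hβ
      have hxu : ∀ u, x u = s + χA u * β + χB u * α := by
        intro u
        have hh := congrFun hx u
        rw [hmv x u] at hh
        simp only [Pi.zero_apply] at hh
        linear_combination -hh + x u * h2z
      have hrelα : α = p * (s + β) := by
        have h1 : ∀ u, χA u * x u = χA u * s + χA u * β := by
          intro u
          rw [hxu u]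
          calc χA u * (s + χA u * β + χB u * α)
              = χA u * s + (χA u * χA u) * β + (χA u * χB u) * α := by ring
            _ = χA u * s + χA u * β := by rw [hAA u, hABz u]; ring
        rw [hα, Finset.sum_congr rfl fun u _ => h1 u, Finset.sum_add_distrib,
          ← Finset.sum_mul, ← Finset.sum_mul, ← hp]
        ring
      have hrelβ : β = q * (s + α) := by
        have h1 : ∀ u, χB u * x u = χB u * s + χB u * α := by
          intro u
          rw [hxu u]
          calc χB u * (s + χA u * β + χB u * α)
              = χB u * s + (χA u * χB u) * β + (χB u * χB u) * α := by ring
            _ = χB u * s + χB u * α := by rw [hBB u, hABz u]; ring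
        rw [hβ, Finset.sum_congr rfl fun u _ => h1 u, Finset.sum_add_distrib,
          ← Finset.sum_mul, ← Finset.sum_mul, ← hq]
        ring
      have hrels : p * β + q * α = 0 := by
        have h1 : s = ∑ u, (s + χA u * β + χB u * α) :=
          hs.trans (Finset.sum_congr rfl fun u _ => hxu u)
        rw [Finset.sum_add_distrib, Finset.sum_add_distrib, ← Finset.sum_mul,
          ← Finset.sum_mul, ← hp, ← hq, Finset.sum_const, Finset.card_univ,
          Fintype.card_fin, nsmul_eq_mul, hcard] at h1
        linear_combination -h1
      rw [Submodule.mem_span_singleton]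
      refine ⟨s + p*q*α, ?_⟩
      funext u
      rw [Pi.smul_apply, smul_eq_mul, hxu u]
      simp only [hv0]
      exact (key1 p q s α β (χA u) (χB u) (hABz u) hrelα hrelβ hrels).symm
    · rw [Submodule.span_le, Set.singleton_subset_iff, SetLike.mem_coe,
        LinearMap.mem_ker, Matrix.mulVecLin_apply]
      exact hv0_ker
  have hfr : Module.finrank (ZMod 2) (LinearMap.ker M.mulVecLin) = 1 := by
    rw [hker]; exact finrank_span_singleton hv0_ne
  have hrn := LinearMap.finrank_range_add_finrank_ker M.mulVecLin
  rw [hfr, Module.finrank_fintype_fun_eq_card, Fintype.card_fin] at hrn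
  have hrank : M.rank = Module.finrank (ZMod 2) (LinearMap.range M.mulVecLin) := rfl
  rw [hrank]
  omega
end
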